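/- arXiv:math/0009198 — 5 statements merged into one kernel-verified Lean document; each statement's English description precedes it below -/
import Mathlib

section
/- For every admissible Verlinde triple (l,l'',l') of level k and every N ≥ 1, the concatenation map c_C(l,l'',l') maps C^{(N)}_{k,l'} into C^{(N+1)}_{k,l} and is injective; moreover, the images c_C(l,l'',l')(C^{(N)}_{k,l'}) for distinct admissible triples of level k with first entry l are pairwise disjoint, and their union over all admissible triples (l,l'',l') of level k with first entry l equals C^{(N+1)}_{k,l}. -/
/-!
Write the triple as `l = x + y`, `l'' = y + z`, `l' = x + z`. Then `c_C` prepends `a₀ = y` and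
`b₁ = z - (a₀ - x)⁺` and shifts every other entry up by one. Rewriting all interval sums as
differences of prefix sums, each defining inequality of the longer path at indices `≥ 2` is an
inequality of the shorter one, and those near the head follow from the shorter path's
inequalities at `i = -1` because `b₁ + a₀ ≤ x + z = l'`. Conversely, a path `(A, B)` of weight `l`
is the image of its tail under the triple with `y = A₀`, `x = l - A₀`, `z = B₁ + (A₁ - x)⁺`;
since `A₀`, `A₁` and `B₁` determine this triple, the images of different triples are disjoint.
-/

/-- `(α,β,γ)` is an admissible Verlinde triple of level `k`. -/
def IsAdm (k α β γ : ℕ) : Prop :=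
  ∃ x y z : ℕ, x + y + z ≤ k ∧ α = x + y ∧ β = y + z ∧ γ = x + z
/-- `x(α,β,γ) = (α+γ-β)/2` (exact on admissible triples). -/
def xA (α β γ : ℕ) : ℕ := (α + γ - β) / 2
/-- `y(α,β,γ) = (α+β-γ)/2` (exact on admissible triples). -/
def yA (α β γ : ℕ) : ℕ := (α + β - γ) / 2
/-- `z(α,β,γ) = (β+γ-α)/2` (exact on admissible triples). -/
def zA (α β γ : ℕ) : ℕ := (β + γ - α) / 2
/-- `a, b : ℕ → ℕ` represent a combinatorial path
`(a_{N-1},…,a_0; b_{N-1},…,b_1)` of length `N`, level `k` and weight `l`: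
`b 0 = 0` is a dummy value, entries vanish from index `N` on, and the
conventions `b_{-1} = l`, `b_∞ = k`, `a_{-1} = a_∞ = 0` are built into the
inequalities (the cases `i = -1` and `j = ∞` of the trapezoid condition are
listed separately). -/
def IsCombPath (k l N : ℕ) (a b : ℕ → ℕ) : Prop :=
  (∀ i, a i ≤ k) ∧ (∀ i, b i ≤ k) ∧
  b 0 = 0 ∧
  (∀ i, N ≤ i → a i = 0) ∧ (∀ i, N ≤ i → b i = 0) ∧
  a 0 ≤ l ∧
  (∀ i, a i + b (i + 1) + a (i + 1) ≤ k) ∧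
  (∀ i, b i + a i + b (i + 1) ≤ k) ∧
  (∀ i j : ℕ, i < j →
    ∑ s ∈ Finset.Icc i j, b s ≤ k + ∑ s ∈ Finset.Ico (i + 1) (j - 1), a s) ∧
  (∀ j : ℕ, l + ∑ s ∈ Finset.Icc 0 j, b s ≤ k + ∑ s ∈ Finset.Ico 0 (j - 1), a s) ∧
  (∀ i : ℕ, (∑ s ∈ Finset.Icc i N, b s) + k ≤ k + ∑ s ∈ Finset.Icc (i + 1) N, a s) ∧
  (l + (∑ s ∈ Finset.Icc 0 N, b s) + k ≤ k + ∑ s ∈ Finset.Icc 0 N, a s)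
/-- The concatenation map `c_C(l,l'',l')` on combinatorial paths: it appends
`a = y(l,l'',l')` as the new index-`0` entry of the `a`-sequence and
`b = z(l,l'',l') - (a 0 - x(l,l'',l'))⁺` as the new index-`1` entry of the
`b`-sequence, shifting all previous indices up by one. -/
def concatC (l l'' l' : ℕ) (a b : ℕ → ℕ) : (ℕ → ℕ) × (ℕ → ℕ) :=
  (fun i => if i = 0 then yA l l'' l' else a (i - 1),
   fun i => if i = 0 then 0
     else if i = 1 then zA l l'' l' - (a 0 - xA l l'' l') else b (i - 1))

open Finset

theorem sum_Ico_eq_sum_range_sub (f : ℕ → ℕ) (i j : ℕ) :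
    ∑ s ∈ Ico i j, f s = ∑ s ∈ range j, f s - ∑ s ∈ range i, f s := by
  rcases le_total i j with h | h
  · rw [← sum_range_add_sum_Ico f h, Nat.add_sub_cancel_left]
  · rw [Ico_eq_empty_of_le h, sum_empty,
      Nat.sub_eq_zero_of_le (sum_le_sum_of_subset (range_subset_range.2 h))]

theorem sum_Icc_eq_sum_range_sub (f : ℕ → ℕ) (i j : ℕ) :
    ∑ s ∈ Icc i j, f s = ∑ s ∈ range (j + 1), f s - ∑ s ∈ range i, f s := by
  rw [← Ico_add_one_right_eq_Icc, sum_Ico_eq_sum_range_sub]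

theorem apply_zero_le_sum_range_succ (f : ℕ → ℕ) (n : ℕ) : f 0 ≤ ∑ i ∈ range (n + 1), f i :=
  single_le_sum (fun _ _ => Nat.zero_le _) (mem_range.2 n.succ_pos)

theorem IsCombPath.snd_zero {k l N : ℕ} {a b : ℕ → ℕ} (h : IsCombPath k l N a b) : b 0 = 0 :=
  h.2.2.1

theorem IsCombPath.fst_zero_le {k l N : ℕ} {a b : ℕ → ℕ} (h : IsCombPath k l N a b) :
    a 0 ≤ l :=
  h.2.2.2.2.2.1

structure IsPrepend (A B a b : ℕ → ℕ) : Prop where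
  fst_succ : ∀ i, A (i + 1) = a i
  snd_zero : B 0 = 0
  snd_add_two : ∀ i, B (i + 2) = b (i + 1)

namespace IsPrepend

variable {A B a b : ℕ → ℕ}

theorem sum_range_fst (h : IsPrepend A B a b) (n : ℕ) :
    ∑ i ∈ range (n + 1), A i = A 0 + ∑ i ∈ range n, a i := by
  simp only [sum_range_succ', h.fst_succ, add_comm]

theorem sum_range_snd (h : IsPrepend A B a b) (hb : b 0 = 0) (n : ℕ) :
    ∑ i ∈ range (n + 2), B i = B 1 + ∑ i ∈ range (n + 1), b i := by
  rw [sum_range_succ', sum_range_succ', sum_range_succ' b, hb, h.snd_zero]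
  simp only [h.snd_add_two, zero_add]
  omega

end IsPrepend

theorem isPrepend_concatC (l l'' l' : ℕ) (a b : ℕ → ℕ) :
    IsPrepend (concatC l l'' l' a b).1 (concatC l l'' l' a b).2 a b :=
  ⟨fun _ => rfl, rfl, fun _ => rfl⟩

section Prepend

variable {k N x y z : ℕ} {A B a b : ℕ → ℕ}

theorem IsCombPath.trapezoid_prepend (h : IsCombPath k (x + z) N a b) (hp : IsPrepend A B a b)
    (hB1 : B 1 = z - (a 0 - x)) (i j : ℕ) (hij : i < j) :
    ∑ s ∈ Icc i j, B s ≤ k + ∑ s ∈ Ico (i + 1) (j - 1), A s := by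
  obtain ⟨-, -, hb0, -, -, ha0, -, -, h9, h10, -, -⟩ := h
  simp only [sum_Icc_eq_sum_range_sub, sum_Ico_eq_sum_range_sub, sum_range_zero, Nat.sub_zero]
    at h9 h10 ⊢
  -- for `i ≤ 1` the old inequality at `i = -1` (weight `x + z`) suffices, as `B 1 + a 0 ≤ x + z`
  rcases i with _ | _ | m
  · obtain ⟨n, rfl⟩ : ∃ n, j = n + 1 := ⟨j - 1, by omega⟩
    rcases n with _ | n
    · have := h10 0
      simp only [hp.sum_range_fst, hp.sum_range_snd hb0, hB1, sum_range_zero, sum_range_one, hb0,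
        zero_add, Nat.reduceAdd, Nat.reduceSubDiff] at this ⊢
      omega
    · have := h10 (n + 1)
      simp only [hp.sum_range_fst, hp.sum_range_snd hb0, hB1, sum_range_zero, zero_add,
        Nat.add_assoc, Nat.reduceAdd, Nat.reduceSubDiff] at this ⊢
      omega
  · obtain ⟨n, rfl⟩ : ∃ n, j = n + 2 := ⟨j - 2, by omega⟩
    have := h10 (n + 1)
    simp only [hp.sum_range_fst, hp.sum_range_snd hb0, hp.snd_zero, hB1, sum_range_one,
      zero_add, Nat.add_assoc, Nat.reduceAdd, Nat.reduceSubDiff] at this ⊢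
    omega
  · obtain ⟨n, rfl⟩ : ∃ n, j = n + 3 := ⟨j - 3, by omega⟩
    have := h9 (m + 1) (n + 2) (by omega)
    simp only [hp.sum_range_fst, hp.sum_range_snd hb0, Nat.add_assoc, Nat.reduceAdd,
      Nat.reduceSubDiff] at this ⊢
    omega

theorem IsCombPath.trapezoid_left_prepend (h : IsCombPath k (x + z) N a b)
    (hp : IsPrepend A B a b) (hA0 : A 0 = y) (hB1 : B 1 = z - (a 0 - x)) (hxyz : x + y + z ≤ k)
    (j : ℕ) : x + y + ∑ s ∈ Icc 0 j, B s ≤ k + ∑ s ∈ Ico 0 (j - 1), A s := by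
  obtain ⟨-, -, hb0, -, -, -, -, -, -, h10, -, -⟩ := h
  simp only [sum_Icc_eq_sum_range_sub, sum_Ico_eq_sum_range_sub, sum_range_zero, Nat.sub_zero]
    at h10 ⊢
  rcases j with _ | _ | n
  · simp only [hp.snd_zero, sum_range_one, zero_add]
    omega
  · simp only [hp.sum_range_snd hb0, hB1, sum_range_one, hb0, zero_add, Nat.reduceAdd]
    omega
  · have := h10 (n + 1)
    simp only [hp.sum_range_fst, hp.sum_range_snd hb0, hA0, hB1, Nat.add_assoc, Nat.reduceAdd,
      Nat.reduceSubDiff] at this ⊢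
    omega

theorem IsCombPath.trapezoid_right_prepend (h : IsCombPath k (x + z) N a b)
    (hp : IsPrepend A B a b) (hB1 : B 1 = z - (a 0 - x)) (i : ℕ) :
    ∑ s ∈ Icc i (N + 1), B s + k ≤ k + ∑ s ∈ Icc (i + 1) (N + 1), A s := by
  obtain ⟨-, -, hb0, -, -, ha0, -, -, -, -, h11, h12⟩ := h
  simp only [sum_Icc_eq_sum_range_sub, sum_range_zero, Nat.sub_zero] at h11 h12 ⊢
  rcases i with _ | _ | m
  · simp only [hp.sum_range_fst, hp.sum_range_snd hb0, hB1, sum_range_zero, zero_add,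
      Nat.add_assoc, Nat.reduceAdd]
    omega
  · simp only [hp.sum_range_fst, hp.sum_range_snd hb0, hp.snd_zero, hB1, sum_range_one,
      zero_add, Nat.add_assoc, Nat.reduceAdd]
    omega
  · have := h11 (m + 1)
    simp only [hp.sum_range_fst, hp.sum_range_snd hb0, Nat.add_assoc, Nat.reduceAdd] at this ⊢
    omega

theorem IsCombPath.prepend (h : IsCombPath k (x + z) N a b) (hp : IsPrepend A B a b)
    (hA0 : A 0 = y) (hB1 : B 1 = z - (a 0 - x)) (hxyz : x + y + z ≤ k) :
    IsCombPath k (x + y) (N + 1) A B := by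
  have htrap := h.trapezoid_prepend hp hB1
  have hleft := h.trapezoid_left_prepend hp hA0 hB1 hxyz
  have hright := h.trapezoid_right_prepend hp hB1
  obtain ⟨ha, hb, hb0, haN, hbN, ha0, h7, h8, -, h10, -, h12⟩ := h
  simp only [sum_Icc_eq_sum_range_sub, sum_Ico_eq_sum_range_sub, sum_range_zero, Nat.sub_zero]
    at h10 h12
  refine ⟨?_, ?_, hp.snd_zero, ?_, ?_, by omega, ?_, ?_, htrap, hleft, hright, ?_⟩
  · rintro (_ | i)
    · omega
    · rw [hp.fst_succ]; exact ha i
  · rintro (_ | _ | i)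
    · rw [hp.snd_zero]; exact Nat.zero_le k
    · simp only [zero_add, hB1]; omega
    · rw [hp.snd_add_two]; exact hb (i + 1)
  · rintro (_ | i) hi
    · omega
    · rw [hp.fst_succ]; exact haN i (by omega)
  · rintro (_ | _ | i) hi
    · exact hp.snd_zero
    · -- a path of length `0` has weight `0`, so `x = z = 0`
      obtain rfl : N = 0 := by omega
      simp only [zero_add, sum_range_one, hb0, haN 0 le_rfl] at h12
      simp only [zero_add, hB1]
      omega
    · rw [hp.snd_add_two]; exact hbN (i + 1) (by omega)
  · rintro (_ | i)
    · simp only [hA0, hB1, hp.fst_succ, zero_add]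
      omega
    · simp only [hp.fst_succ, hp.snd_add_two]; exact h7 i
  · rintro (_ | _ | i)
    · simp only [hp.snd_zero, hA0, hB1, zero_add]
      omega
    · have := h10 1
      simp only [hB1, hp.fst_succ, hp.snd_add_two, sum_range_succ, sum_range_zero, hb0, zero_add,
        Nat.reduceAdd, Nat.reduceSubDiff] at this ⊢
      omega
    · simp only [hp.fst_succ, hp.snd_add_two]; exact h8 (i + 1)
  · simp only [hp.sum_range_fst, hp.sum_range_snd hb0, hA0, hB1, sum_range_zero, Nat.add_assoc,
      Nat.reduceAdd, sum_Icc_eq_sum_range_sub]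
    omega

end Prepend

theorem IsCombPath.add_head_le {k l N x : ℕ} {A B : ℕ → ℕ} (h : IsCombPath k l N A B)
    (hx : x + A 0 = l) : x + A 0 + (B 1 + (A 1 - x)) ≤ k := by
  obtain ⟨-, -, hB0, -, -, -, h7, -, -, h10, -, -⟩ := h
  have h70 := h7 0
  have h101 := h10 1
  simp only [sum_Icc_eq_sum_range_sub, sum_Ico_eq_sum_range_sub, sum_range_succ, sum_range_zero,
    hB0, zero_add, Nat.sub_self] at h70 h101
  omega

section OfPrepend

variable {k l N x z : ℕ} {A B a b : ℕ → ℕ}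

theorem IsCombPath.trapezoid_of_prepend (h : IsCombPath k l (N + 1) A B)
    (hp : IsPrepend A B a b) (hb0 : b 0 = 0) (i j : ℕ) (hij : i < j) :
    ∑ s ∈ Icc i j, b s ≤ k + ∑ s ∈ Ico (i + 1) (j - 1), a s := by
  obtain ⟨-, -, hB0, -, -, -, -, -, h9, -, -, -⟩ := h
  simp only [sum_Icc_eq_sum_range_sub, sum_Ico_eq_sum_range_sub] at h9 ⊢
  obtain ⟨n, rfl⟩ : ∃ n, j = n + 1 := ⟨j - 1, by omega⟩
  rcases i with _ | m
  · have := h9 1 (n + 2) (by omega)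
    simp only [hp.sum_range_fst, hp.sum_range_snd hb0, hB0, sum_range_zero, sum_range_one,
      zero_add, Nat.sub_zero, Nat.add_assoc, Nat.reduceAdd, Nat.reduceSubDiff] at this ⊢
    omega
  · have := h9 (m + 2) (n + 2) (by omega)
    simp only [hp.sum_range_fst, hp.sum_range_snd hb0, Nat.add_assoc, Nat.reduceAdd,
      Nat.reduceSubDiff] at this ⊢
    omega

theorem IsCombPath.trapezoid_left_of_prepend (h : IsCombPath k l (N + 1) A B)
    (hp : IsPrepend A B a b) (hb0 : b 0 = 0) (hx : x + A 0 = l) (hz : B 1 + (a 0 - x) = z)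
    (j : ℕ) : x + z + ∑ s ∈ Icc 0 j, b s ≤ k + ∑ s ∈ Ico 0 (j - 1), a s := by
  have hxz := h.add_head_le hx
  rw [hp.fst_succ] at hxz
  obtain ⟨-, -, hB0, -, -, -, -, h8, h9, h10, -, -⟩ := h
  simp only [sum_Icc_eq_sum_range_sub, sum_Ico_eq_sum_range_sub, sum_range_zero, Nat.sub_zero]
    at h9 h10 ⊢
  -- `x + z = B 1 + max (a 0) x`: the case `a 0 ≥ x` uses the new inequality at `i = 1`,
  -- the case `a 0 < x` the one at `i = -1`
  rcases j with _ | _ | n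
  · simp only [zero_add, sum_range_one, hb0, Nat.zero_sub, sum_range_zero]
    omega
  · have h81 := h8 1
    have h102 := h10 2
    simp only [hp.fst_succ, hp.snd_add_two, sum_range_succ, hp.sum_range_fst,
      hp.sum_range_snd hb0, hb0, sum_range_zero, zero_add, Nat.add_assoc, Nat.reduceAdd,
      Nat.reduceSubDiff] at h81 h102 ⊢
    omega
  · have ha0 := apply_zero_le_sum_range_succ a n
    have h9' := h9 1 (n + 3) (by omega)
    have h10' := h10 (n + 3)
    simp only [hp.sum_range_fst, hp.sum_range_snd hb0, hB0, sum_range_one,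
      Nat.sub_zero, Nat.add_assoc, Nat.reduceAdd, Nat.reduceSubDiff] at h9' h10' ⊢
    omega

theorem IsCombPath.of_prepend (h : IsCombPath k l (N + 1) A B) (hp : IsPrepend A B a b)
    (hb0 : b 0 = 0) (hx : x + A 0 = l) (hz : B 1 + (a 0 - x) = z) :
    IsCombPath k (x + z) N a b := by
  have htrap := h.trapezoid_of_prepend hp hb0
  have hleft := h.trapezoid_left_of_prepend hp hb0 hx hz
  obtain ⟨hA, hB, hB0, hAN, hBN, -, h7, h8, -, -, h11, h12⟩ := h
  simp only [sum_Icc_eq_sum_range_sub, sum_range_zero, Nat.sub_zero] at h11 h12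
  have h111 := h11 1
  simp only [hp.sum_range_fst, hp.sum_range_snd hb0, hB0, sum_range_one, Nat.add_assoc,
    Nat.reduceAdd] at h111
  refine ⟨fun i => hp.fst_succ i ▸ hA (i + 1), ?_, hb0,
    fun i hi => hp.fst_succ i ▸ hAN (i + 1) (by omega), ?_, by omega,
    fun i => by simpa only [hp.fst_succ, hp.snd_add_two] using h7 (i + 1), ?_, htrap, hleft, ?_, ?_⟩
  · rintro (_ | i)
    · rw [hb0]; exact Nat.zero_le k
    · rw [← hp.snd_add_two]; exact hB (i + 2)
  · rintro (_ | i) hi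
    · exact hb0
    · rw [← hp.snd_add_two]; exact hBN (i + 2) (by omega)
  · rintro (_ | i)
    · have := h8 1
      simp only [hp.fst_succ, hp.snd_add_two, hb0, zero_add] at this ⊢
      omega
    · simpa only [hp.fst_succ, hp.snd_add_two] using h8 (i + 2)
  · rintro (_ | m)
    · simp only [sum_range_zero, sum_range_one, zero_add, Nat.sub_zero, sum_Icc_eq_sum_range_sub]
      omega
    · have := h11 (m + 2)
      simp only [hp.sum_range_fst, hp.sum_range_snd hb0, Nat.add_assoc, Nat.reduceAdd,
        sum_Icc_eq_sum_range_sub] at this ⊢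
      omega
  · have ha0 := apply_zero_le_sum_range_succ a N
    simp only [hp.sum_range_fst, hp.sum_range_snd hb0, sum_range_zero, Nat.sub_zero,
      Nat.add_assoc, Nat.reduceAdd, sum_Icc_eq_sum_range_sub] at h12 ⊢
    omega

end OfPrepend

theorem xA_add (x y z : ℕ) : xA (x + y) (y + z) (x + z) = x := by unfold xA; omega

theorem yA_add (x y z : ℕ) : yA (x + y) (y + z) (x + z) = y := by unfold yA; omega

theorem zA_add (x y z : ℕ) : zA (x + y) (y + z) (x + z) = z := by unfold zA; omega

section concatC

variable {x y z : ℕ} {A B a b : ℕ → ℕ}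

theorem concatC_add_eq_iff :
    concatC (x + y) (y + z) (x + z) a b = (A, B) ↔
      IsPrepend A B a b ∧ A 0 = y ∧ B 1 = z - (a 0 - x) := by
  have hB1 : (concatC (x + y) (y + z) (x + z) a b).2 1 = z - (a 0 - x) := by
    simp only [concatC, one_ne_zero, ↓reduceIte, xA_add, zA_add]
  constructor
  · intro h
    obtain rfl : (concatC (x + y) (y + z) (x + z) a b).1 = A := congrArg Prod.fst h
    obtain rfl : (concatC (x + y) (y + z) (x + z) a b).2 = B := congrArg Prod.snd h
    exact ⟨isPrepend_concatC .., yA_add x y z, hB1⟩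
  · rintro ⟨hp, rfl, hB1'⟩
    refine Prod.ext (funext fun i => ?_) (funext fun i => ?_)
    · rcases i with _ | i
      · exact yA_add x (A 0) z
      · exact (hp.fst_succ i).symm
    · rcases i with _ | _ | i
      · exact hp.snd_zero.symm
      · exact hB1.trans hB1'.symm
      · exact (hp.snd_add_two i).symm

end concatC

theorem IsAdm.isCombPath_concatC {k l l'' l' N : ℕ} {a b : ℕ → ℕ} (hadm : IsAdm k l l'' l')
    (h : IsCombPath k l' N a b) :
    IsCombPath k l (N + 1) (concatC l l'' l' a b).1 (concatC l l'' l' a b).2 := by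
  obtain ⟨x, y, z, hxyz, rfl, rfl, rfl⟩ := hadm
  obtain ⟨hp, hA0, hB1⟩ := concatC_add_eq_iff.1 rfl
  exact h.prepend hp hA0 hB1 hxyz

theorem eq_of_concatC_eq {l l'' l' : ℕ} {a b a' b' : ℕ → ℕ} (hb : b 0 = 0) (hb' : b' 0 = 0)
    (h : concatC l l'' l' a b = concatC l l'' l' a' b') : a = a' ∧ b = b' := by
  refine ⟨funext fun i => congrArg (·.1 (i + 1)) h, funext fun i => ?_⟩
  rcases i with _ | i
  · rw [hb, hb']
  · exact congrArg (·.2 (i + 2)) h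

theorem IsAdm.eq_of_concatC_eq {k l l₁'' l₁' l₂'' l₂' : ℕ} {a b a' b' : ℕ → ℕ}
    (h₁ : IsAdm k l l₁'' l₁') (h₂ : IsAdm k l l₂'' l₂') (ha : a 0 ≤ l₁') (ha' : a' 0 ≤ l₂')
    (h : concatC l l₁'' l₁' a b = concatC l l₂'' l₂' a' b') : l₁'' = l₂'' ∧ l₁' = l₂' := by
  obtain ⟨x₁, y₁, z₁, -, rfl, rfl, rfl⟩ := h₁
  obtain ⟨x₂, y₂, z₂, -, hl, rfl, rfl⟩ := h₂
  have hy := congrArg (·.1 0) h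
  have ha0 := congrArg (·.1 1) h
  have hc := congrArg (·.2 1) h
  simp only [concatC, ↓reduceIte, Nat.one_ne_zero, Nat.sub_self, xA, yA, zA] at hy ha0 hc
  omega

theorem exists_concatC_eq {k l N : ℕ} {A B : ℕ → ℕ} (h : IsCombPath k l (N + 1) A B) :
    ∃ l'' l' a b, IsAdm k l l'' l' ∧ IsCombPath k l' N a b ∧ concatC l l'' l' a b = (A, B) := by
  obtain ⟨x, rfl⟩ : ∃ x, l = x + A 0 := ⟨l - A 0, by have := h.fst_zero_le; omega⟩
  set z := B 1 + (A 1 - x)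
  have hp : IsPrepend A B (fun i => A (i + 1)) (fun i => if i = 0 then 0 else B (i + 1)) :=
    ⟨fun _ => rfl, h.snd_zero, fun _ => rfl⟩
  exact ⟨A 0 + z, x + z, _, _, ⟨x, A 0, z, h.add_head_le rfl, rfl, rfl, rfl⟩,
    h.of_prepend hp rfl rfl rfl, concatC_add_eq_iff.2 ⟨hp, rfl, (by omega : B 1 = z - (A 1 - x))⟩⟩
theorem stmt_1_general (k N l : ℕ) :
    (∀ l'' l', IsAdm k l l'' l' → ∀ a b, IsCombPath k l' N a b →
      IsCombPath k l (N + 1) (concatC l l'' l' a b).1 (concatC l l'' l' a b).2) ∧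
    (∀ l'' l', IsAdm k l l'' l' → ∀ a b a' b', IsCombPath k l' N a b →
      IsCombPath k l' N a' b' → concatC l l'' l' a b = concatC l l'' l' a' b' →
      a = a' ∧ b = b') ∧
    (∀ l₁'' l₁' l₂'' l₂', IsAdm k l l₁'' l₁' → IsAdm k l l₂'' l₂' →
      (l₁'', l₁') ≠ (l₂'', l₂') → ∀ a b a' b', IsCombPath k l₁' N a b →
      IsCombPath k l₂' N a' b' → concatC l l₁'' l₁' a b ≠ concatC l l₂'' l₂' a' b') ∧
    (∀ A B, IsCombPath k l (N + 1) A B →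
      ∃ l'' l' a b, IsAdm k l l'' l' ∧ IsCombPath k l' N a b ∧
        concatC l l'' l' a b = (A, B)) := by
  refine ⟨fun l'' l' hadm a b h => hadm.isCombPath_concatC h,
    fun l'' l' _ a b a' b' h h' heq => eq_of_concatC_eq h.snd_zero h'.snd_zero heq,
    fun l₁'' l₁' l₂'' l₂' h₁ h₂ hne a b a' b' h h' heq => hne ?_,
    fun A B h => exists_concatC_eq h⟩
  obtain ⟨rfl, rfl⟩ := h₁.eq_of_concatC_eq h₂ h.fst_zero_le h'.fst_zero_le heq
  rfl

/-- For every admissible Verlinde triple `(l,l'',l')` of level `k`, the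
concatenation map `c_C(l,l'',l')` maps `C^{(N)}_{k,l'}` into `C^{(N+1)}_{k,l}`
and is injective; the images for distinct admissible triples with first entry
`l` are pairwise disjoint, and their union is all of `C^{(N+1)}_{k,l}`. -/
theorem stmt_1 (k N l : ℕ) (hk : 1 ≤ k) (hN : 1 ≤ N) (hl : l ≤ k) :
    (∀ l'' l', IsAdm k l l'' l' → ∀ a b, IsCombPath k l' N a b →
      IsCombPath k l (N + 1) (concatC l l'' l' a b).1 (concatC l l'' l' a b).2) ∧
    (∀ l'' l', IsAdm k l l'' l' → ∀ a b a' b', IsCombPath k l' N a b →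
      IsCombPath k l' N a' b' → concatC l l'' l' a b = concatC l l'' l' a' b' →
      a = a' ∧ b = b') ∧
    (∀ l₁'' l₁' l₂'' l₂', IsAdm k l l₁'' l₁' → IsAdm k l l₂'' l₂' →
      (l₁'', l₁') ≠ (l₂'', l₂') → ∀ a b a' b', IsCombPath k l₁' N a b →
      IsCombPath k l₂' N a' b' → concatC l l₁'' l₁' a b ≠ concatC l l₂'' l₂' a' b') ∧
    (∀ A B, IsCombPath k l (N + 1) A B →
      ∃ l'' l' a b, IsAdm k l l'' l' ∧ IsCombPath k l' N a b ∧
        concatC l l'' l' a b = (A, B)) :=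
  stmt_1_general k N l
end

section
/- The componentwise addition map m_C : C^{(N)}_{k₁,l₁} × C^{(N)}_{k₂,l₂} → C^{(N)}_{k₁+k₂,l₁+l₂} is well-defined and surjective. Moreover, if (a;b) ∈ C^{(N)}_{k,l'} and (l,l'',l') is an admissible triple of level k written as a sum (l,l'',l') = (l₁,l₁'',l₁') + (l₂,l₂'',l₂') of admissible triples of levels k₁ and k₂ with k₁ + k₂ = k, then there exist (a⁽¹⁾;b⁽¹⁾) ∈ C^{(N)}_{k₁,l₁'} and (a⁽²⁾;b⁽²⁾) ∈ C^{(N)}_{k₂,l₂'} such that (a⁽¹⁾;b⁽¹⁾) + (a⁽²⁾;b⁽²⁾) = (a;b) and c_C(l₁,l₁'',l₁')(a⁽¹⁾;b⁽¹⁾) + c_C(l₂,l₂'',l₂')(a⁽²⁾;b⁽²⁾) = c_C(l,l'',l')(a;b). -/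
/-!
Removing the first step of a path `(a; b)` of length `N + 1` and weight `l` leaves a path of
length `N` and weight `l' = b₁ + max (l - a₀) a₁`, and `(a; b)` is recovered from it by the
concatenation map of the admissible triple with `x = l - a₀`, `y = a₀`, `x + z = l'`.
Conversely every concatenation of a path is a path. Paths are therefore split by induction on
their length: split the triple of the first step into admissible triples of levels `k₁` and `k₂`,
split the shorter path by induction and concatenate again. The truncated subtraction
`(a₀ - x)⁺` in the concatenation map is additive only when the two summands of `a₀` lie on the
same side of the two summands of `x`; the triple can always be split so that this holds, and
this side condition is carried through the induction.
-/

open Finset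

section IntervalSums

variable {M : Type*} [AddCommMonoid M] (f : ℕ → M)

lemma sum_Icc_comp_add_one (i j : ℕ) :
    ∑ s ∈ Icc i j, f (s + 1) = ∑ s ∈ Icc (i + 1) (j + 1), f s := by
  rw [← map_add_right_Icc, sum_map]; rfl

lemma sum_Ico_comp_add_one (i j : ℕ) :
    ∑ s ∈ Ico i j, f (s + 1) = ∑ s ∈ Ico (i + 1) (j + 1), f s :=
  sum_Ico_add' f i j 1

lemma sum_Icc_eq_add_sum_Icc {i j : ℕ} (h : i ≤ j) :
    ∑ s ∈ Icc i j, f s = f i + ∑ s ∈ Icc (i + 1) j, f s := by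
  rw [Icc_add_one_left_eq_Ioc, add_sum_Ioc_eq_sum_Icc h]

lemma sum_Ico_eq_add_sum_Ico {i j : ℕ} (h : i < j) :
    ∑ s ∈ Ico i j, f s = f i + ∑ s ∈ Ico (i + 1) j, f s :=
  sum_eq_sum_Ico_succ_bot h f

lemma sum_Icc_zero_eq_add_add {j : ℕ} (h : 1 ≤ j) :
    ∑ s ∈ Icc 0 j, f s = f 0 + f 1 + ∑ s ∈ Icc 2 j, f s := by
  rw [sum_Icc_eq_add_sum_Icc f j.zero_le, sum_Icc_eq_add_sum_Icc f h, add_assoc]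

end IntervalSums

theorem IsAdm.decomp {k α β γ : ℕ} (h : IsAdm k α β γ) :
    xA α β γ + yA α β γ = α ∧ yA α β γ + zA α β γ = β ∧ xA α β γ + zA α β γ = γ ∧
      xA α β γ + yA α β γ + zA α β γ ≤ k := by
  obtain ⟨x, y, z, hk, rfl, rfl, rfl⟩ := h
  unfold xA yA zA
  omega

theorem IsAdm.add {k₁ k₂ α₁ β₁ γ₁ α₂ β₂ γ₂ : ℕ} (h₁ : IsAdm k₁ α₁ β₁ γ₁)
    (h₂ : IsAdm k₂ α₂ β₂ γ₂) : IsAdm (k₁ + k₂) (α₁ + α₂) (β₁ + β₂) (γ₁ + γ₂) := by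
  obtain ⟨x₁, y₁, z₁, hk₁, rfl, rfl, rfl⟩ := h₁
  obtain ⟨x₂, y₂, z₂, hk₂, rfl, rfl, rfl⟩ := h₂
  exact ⟨x₁ + x₂, y₁ + y₂, z₁ + z₂, by omega, by omega, by omega, by omega⟩

theorem IsAdm.exists_split {k₁ k₂ α₁ α₂ β γ p₁ p₂ : ℕ} (h : IsAdm (k₁ + k₂) (α₁ + α₂) β γ)
    (h₁ : α₁ ≤ k₁) (h₂ : α₂ ≤ k₂) (hp₁ : p₁ ≤ α₁) (hp₂ : p₂ ≤ α₂) :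
    ∃ β₁ γ₁ β₂ γ₂, IsAdm k₁ α₁ β₁ γ₁ ∧ IsAdm k₂ α₂ β₂ γ₂ ∧ β = β₁ + β₂ ∧ γ = γ₁ + γ₂ ∧
      ((p₁ ≤ yA α₁ β₁ γ₁ ∧ p₂ ≤ yA α₂ β₂ γ₂) ∨ (yA α₁ β₁ γ₁ ≤ p₁ ∧ yA α₂ β₂ γ₂ ≤ p₂)) := by
  obtain ⟨x, y, z, hk, hα, rfl, rfl⟩ := h
  -- `t` becomes the `y`-entry of the first triple, `u` its `z`-entry
  obtain ⟨t, ht⟩ : ∃ t, α₁ ≤ x + t ∧ t ≤ α₁ ∧ t ≤ y ∧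
      ((p₁ ≤ t ∧ p₂ ≤ y - t) ∨ (t ≤ p₁ ∧ y - t ≤ p₂)) := by
    rcases le_or_gt (p₁ + p₂) y with hc | hc
    · exact ⟨max p₁ (α₁ - x), by omega⟩
    · exact ⟨max (y - p₂) (α₁ - x), by omega⟩
  obtain ⟨u, hu⟩ : ∃ u, u ≤ z ∧ α₁ + u ≤ k₁ ∧ α₂ + (z - u) ≤ k₂ :=
    ⟨min z (k₁ - α₁), by omega⟩
  have hy₁ : yA α₁ (t + u) (α₁ - t + u) = t := by unfold yA; omega
  have hy₂ : yA α₂ (y - t + (z - u)) (x - (α₁ - t) + (z - u)) = y - t := by unfold yA; omega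
  refine ⟨t + u, α₁ - t + u, y - t + (z - u), x - (α₁ - t) + (z - u),
    ⟨α₁ - t, t, u, by omega, by omega, rfl, rfl⟩,
    ⟨x - (α₁ - t), y - t, z - u, by omega, by omega, rfl, rfl⟩, by omega, by omega, ?_⟩
  rw [hy₁, hy₂]
  exact ht.2.2.2

section ConcatC

variable (l l'' l' : ℕ) (a b : ℕ → ℕ)

@[simp] lemma concatC_fst_zero : (concatC l l'' l' a b).1 0 = yA l l'' l' := rfl

@[simp] lemma concatC_fst_add_one (i : ℕ) : (concatC l l'' l' a b).1 (i + 1) = a i := rfl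

@[simp] lemma concatC_snd_zero : (concatC l l'' l' a b).2 0 = 0 := rfl

@[simp] lemma concatC_snd_one :
    (concatC l l'' l' a b).2 1 = zA l l'' l' - (a 0 - xA l l'' l') := rfl

@[simp] lemma concatC_snd_add_two (i : ℕ) : (concatC l l'' l' a b).2 (i + 2) = b (i + 1) := rfl

end ConcatC

theorem concatC_add_concatC {k₁ k₂ l₁ l₁'' l₁' l₂ l₂'' l₂' : ℕ} {a₁ b₁ a₂ b₂ : ℕ → ℕ}
    (h₁ : IsAdm k₁ l₁ l₁'' l₁') (h₂ : IsAdm k₂ l₂ l₂'' l₂') (ha₁ : a₁ 0 ≤ l₁') (ha₂ : a₂ 0 ≤ l₂')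
    (hside : (xA l₁ l₁'' l₁' ≤ a₁ 0 ∧ xA l₂ l₂'' l₂' ≤ a₂ 0) ∨
      (a₁ 0 ≤ xA l₁ l₁'' l₁' ∧ a₂ 0 ≤ xA l₂ l₂'' l₂')) :
    concatC l₁ l₁'' l₁' a₁ b₁ + concatC l₂ l₂'' l₂' a₂ b₂ =
      concatC (l₁ + l₂) (l₁'' + l₂'') (l₁' + l₂') (a₁ + a₂) (b₁ + b₂) := by
  have := h₁.decomp; have := h₂.decomp; have := (h₁.add h₂).decomp
  ext i <;> rcases i with _ | _ | i <;>
    simp only [Prod.fst_add, Prod.snd_add, Pi.add_apply, zero_add, concatC_fst_zero,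
      concatC_fst_add_one, concatC_snd_zero, concatC_snd_one, concatC_snd_add_two] <;> omega

def tailB (b : ℕ → ℕ) (i : ℕ) : ℕ := if i = 0 then 0 else b (i + 1)

lemma sum_Icc_succ_tailB (b : ℕ → ℕ) (i j : ℕ) :
    ∑ s ∈ Icc (i + 1) j, tailB b s = ∑ s ∈ Icc (i + 2) (j + 1), b s := by
  rw [← sum_Icc_comp_add_one]
  exact sum_congr rfl fun s hs => if_neg (by rw [mem_Icc] at hs; omega)

lemma sum_Icc_zero_tailB (b : ℕ → ℕ) (j : ℕ) :
    ∑ s ∈ Icc 0 j, tailB b s = ∑ s ∈ Icc 2 (j + 1), b s := by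
  rw [sum_Icc_eq_add_sum_Icc _ j.zero_le, sum_Icc_succ_tailB]; simp [tailB]

namespace IsCombPath

variable {k l N ν : ℕ} {a b : ℕ → ℕ}

theorem b_zero (h : IsCombPath k l N a b) : b 0 = 0 := h.2.2.1

theorem a_zero_le (h : IsCombPath k l N a b) : a 0 ≤ l := h.2.2.2.2.2.1

theorem weight_add_b_one_le (h : IsCombPath k l N a b) : l + b 1 ≤ k := by
  obtain ⟨-, -, hb0, -, -, -, -, -, -, hD, -, -⟩ := h
  simpa [sum_Icc_eq_add_sum_Icc b zero_le_one, hb0] using hD 1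

theorem add {k₁ k₂ l₁ l₂ : ℕ} {a₁ b₁ a₂ b₂ : ℕ → ℕ} (h₁ : IsCombPath k₁ l₁ N a₁ b₁)
    (h₂ : IsCombPath k₂ l₂ N a₂ b₂) : IsCombPath (k₁ + k₂) (l₁ + l₂) N (a₁ + a₂) (b₁ + b₂) := by
  obtain ⟨p1, p2, p3, p4, p5, p6, p7, p8, p9, p10, p11, p12⟩ := h₁
  obtain ⟨q1, q2, q3, q4, q5, q6, q7, q8, q9, q10, q11, q12⟩ := h₂
  refine ⟨fun i => add_le_add (p1 i) (q1 i), fun i => add_le_add (p2 i) (q2 i), by simp [p3, q3],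
    fun i hi => by simp [p4 i hi, q4 i hi], fun i hi => by simp [p5 i hi, q5 i hi],
    add_le_add p6 q6, fun i => ?_, fun i => ?_, fun i j hij => ?_, fun j => ?_, fun i => ?_, ?_⟩ <;>
    simp only [Pi.add_apply, sum_add_distrib]
  · linarith [p7 i, q7 i]
  · linarith [p8 i, q8 i]
  · linarith [p9 i j hij, q9 i j hij]
  · linarith [p10 j, q10 j]
  · linarith [p11 i, q11 i]
  · linarith

theorem single (hl : l ≤ k) : IsCombPath k l 1 (Pi.single 0 l) 0 := by
  refine ⟨fun i => ?_, fun _ => Nat.zero_le _, rfl, fun i hi => ?_, fun _ _ => rfl, by simp,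
    fun i => ?_, fun i => ?_, fun i j _ => by simp, fun j => by simpa using le_add_right hl,
    fun i => by simp, ?_⟩
  · rcases i with _ | i <;> simp [hl]
  · simp [show i ≠ 0 by omega]
  · rcases i with _ | i <;> simp [hl]
  · rcases i with _ | i <;> simp [hl]
  · simp [sum_Icc_eq_add_sum_Icc _ zero_le_one, add_comm]

theorem eq_single_of_length_one (h : IsCombPath k l 1 a b) : a = Pi.single 0 l ∧ b = 0 := by
  obtain ⟨-, -, hb0, hav, hbv, ha0, -, -, -, -, -, hF⟩ := h
  have hb : b = 0 := funext fun i => by rcases i with _ | i <;> simp [hb0, hbv]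
  refine ⟨funext fun i => ?_, hb⟩
  rcases i with _ | i
  · have hl : l + k ≤ k + a 0 := by simpa [hb, sum_Icc_eq_add_sum_Icc a zero_le_one, hav] using hF
    rw [Pi.single_eq_same]
    omega
  · simp [hav]

theorem tail_trapezoid_weight (h : IsCombPath k l (N + 1) a b) (j : ℕ) :
    b 1 + max (l - a 0) (a 1) + ∑ s ∈ Icc 0 j, tailB b s ≤
      k + ∑ s ∈ Ico 0 (j - 1), a (s + 1) := by
  have hl := h.weight_add_b_one_le
  obtain ⟨-, -, hb0, -, -, -, h7, h8, hC, hD, -, -⟩ := h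
  rw [sum_Icc_zero_tailB, sum_Ico_comp_add_one]
  rcases j with _ | _ | j
  · have : a 0 + b 1 + a 1 ≤ k := h7 0
    simpa using (show b 1 + max (l - a 0) (a 1) ≤ k by omega)
  · have hD₂ : l + (b 1 + b 2) ≤ k + a 0 := by
      simpa [sum_Icc_zero_eq_add_add b one_le_two, hb0] using hD 2
    have : b 1 + a 1 + b 2 ≤ k := h8 1
    simpa using (show b 1 + max (l - a 0) (a 1) + b 2 ≤ k by omega)
  · have hD' := hD (j + 1 + 1 + 1)
    have hC' := hC 1 (j + 1 + 1 + 1) (by omega)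
    rw [sum_Icc_zero_eq_add_add b (by omega), sum_Ico_eq_add_sum_Ico a (by omega)] at hD'
    rw [sum_Icc_eq_add_sum_Icc b (by omega)] at hC'
    have hT := sum_Ico_eq_add_sum_Ico a (show 1 < j + 1 + 1 by omega)
    simp only [Nat.reduceAdd, add_tsub_cancel_right] at hD' hC' hT ⊢
    omega

theorem tail_trapezoid_weight_top (h : IsCombPath k l (N + 1) a b) :
    b 1 + max (l - a 0) (a 1) + ∑ s ∈ Icc 0 N, tailB b s + k ≤
      k + ∑ s ∈ Icc 0 N, a (s + 1) := by
  obtain ⟨-, -, hb0, -, -, -, -, -, -, -, hE, hF⟩ := h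
  have hE₁ := hE 1
  rw [sum_Icc_zero_eq_add_add b (by omega), sum_Icc_zero_eq_add_add a (by omega)] at hF
  rw [sum_Icc_eq_add_sum_Icc b (by omega)] at hE₁
  rw [sum_Icc_zero_tailB, sum_Icc_comp_add_one, sum_Icc_eq_add_sum_Icc a (by omega)]
  simp only [Nat.reduceAdd] at hE₁ ⊢
  omega

theorem tail (hN : 1 ≤ N) (h : IsCombPath k l (N + 1) a b) :
    IsCombPath k (b 1 + max (l - a 0) (a 1)) N (fun i => a (i + 1)) (tailB b) := by
  refine ⟨fun i => ?_, fun i => ?_, rfl, fun i hi => ?_, fun i hi => ?_,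
    le_add_left (le_max_right _ _), fun i => ?_, fun i => ?_, fun i j hij => ?_,
    h.tail_trapezoid_weight, fun i => ?_, h.tail_trapezoid_weight_top⟩
  all_goals obtain ⟨ha, hb, hb0, hav, hbv, -, h7, h8, hC, -, hE, -⟩ := h
  · exact ha _
  · unfold tailB; split_ifs <;> simp [hb]
  · exact hav _ (by omega)
  · simpa [tailB, show i ≠ 0 by omega] using hbv (i + 1) (by omega)
  · simpa [tailB] using h7 (i + 1)
  · rcases i with _ | i
    · have : a 1 + b 2 + a 2 ≤ k := h7 1
      show 0 + a 1 + b 2 ≤ k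
      omega
    · simpa [tailB] using h8 (i + 2)
  · obtain ⟨j, rfl⟩ : ∃ j', j = j' + 1 := ⟨j - 1, by omega⟩
    rw [add_tsub_cancel_right, sum_Ico_comp_add_one (f := a)]
    rcases i with _ | i
    · have hC' := hC 1 (j + 1 + 1) (by omega)
      rw [sum_Icc_eq_add_sum_Icc b (by omega)] at hC'
      rw [sum_Icc_zero_tailB]
      simp only [Nat.reduceAdd, add_tsub_cancel_right] at hC' ⊢
      omega
    · simpa [sum_Icc_succ_tailB] using hC (i + 2) (j + 1 + 1) (by omega)
  · rcases i with _ | i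
    · have hE₁ := hE 1
      rw [sum_Icc_eq_add_sum_Icc b (by omega)] at hE₁
      rw [sum_Icc_zero_tailB, sum_Icc_comp_add_one (f := a)]
      simp only [Nat.reduceAdd] at hE₁ ⊢
      omega
    · simpa only [sum_Icc_succ_tailB, sum_Icc_comp_add_one (f := a)] using hE (i + 2)

theorem trapezoid_of_tail (ht : IsCombPath k ν N (fun i => a (i + 1)) (tailB b)) (hb0 : b 0 = 0)
    (hν : b 1 + a 1 ≤ ν) {i j : ℕ} (hi : i ≤ 1) (hij : i < j) :
    ∑ s ∈ Icc i j, b s ≤ k + ∑ s ∈ Ico (i + 1) (j - 1), a s := by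
  obtain ⟨-, -, -, -, -, -, -, -, -, hD, -, -⟩ := ht
  have hB : ∑ s ∈ Icc i j, b s ≤ ∑ s ∈ Icc 0 j, b s :=
    sum_le_sum_of_subset (Icc_subset_Icc_left i.zero_le)
  have hA : ∑ s ∈ Ico 2 (j - 1), a s ≤ ∑ s ∈ Ico (i + 1) (j - 1), a s :=
    sum_le_sum_of_subset (Ico_subset_Ico_left (by omega))
  rw [sum_Icc_zero_eq_add_add b (by omega)] at hB
  obtain ⟨j, rfl⟩ : ∃ j', j = j' + 1 := ⟨j - 1, by omega⟩
  have hD' := hD j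
  rw [sum_Icc_zero_tailB, sum_Ico_comp_add_one] at hD'
  have hT : ∑ s ∈ Ico (0 + 1) (j - 1 + 1), a s ≤ a 1 + ∑ s ∈ Ico 2 j, a s := by
    rcases j with _ | _ | j
    · simp
    · simp
    · exact (sum_Ico_eq_add_sum_Ico a (by omega)).le
  simp only [add_tsub_cancel_right] at hA ⊢
  omega

theorem trapezoid_top_of_tail (ht : IsCombPath k ν N (fun i => a (i + 1)) (tailB b))
    (hb0 : b 0 = 0) (hν : b 1 + a 1 ≤ ν) {i : ℕ} (hi : i ≤ 1) :
    ∑ s ∈ Icc i (N + 1), b s + k ≤ k + ∑ s ∈ Icc (i + 1) (N + 1), a s := by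
  obtain ⟨-, -, -, -, -, -, -, -, -, -, -, hF⟩ := ht
  have hB : ∑ s ∈ Icc i (N + 1), b s ≤ ∑ s ∈ Icc 0 (N + 1), b s :=
    sum_le_sum_of_subset (Icc_subset_Icc_left i.zero_le)
  have hA : ∑ s ∈ Icc 2 (N + 1), a s ≤ ∑ s ∈ Icc (i + 1) (N + 1), a s :=
    sum_le_sum_of_subset (Icc_subset_Icc_left (by omega))
  rw [sum_Icc_zero_eq_add_add b (by omega)] at hB
  rw [sum_Icc_zero_tailB, sum_Icc_comp_add_one, sum_Icc_eq_add_sum_Icc a (by omega)] at hF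
  simp only [Nat.reduceAdd] at hF
  omega

theorem trapezoid_weight_of_tail (ht : IsCombPath k ν N (fun i => a (i + 1)) (tailB b))
    (hb0 : b 0 = 0) (hl : l + b 1 ≤ k) (hν : l + b 1 ≤ ν + a 0) (j : ℕ) :
    l + ∑ s ∈ Icc 0 j, b s ≤ k + ∑ s ∈ Ico 0 (j - 1), a s := by
  obtain ⟨-, -, -, -, -, -, -, -, -, hD, -, -⟩ := ht
  rcases j with _ | _ | j
  · simpa [hb0] using (show l ≤ k by omega)
  · simpa [sum_Icc_zero_eq_add_add b le_rfl, hb0] using hl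
  · have hD' := hD (j + 1)
    rw [sum_Icc_zero_tailB, add_tsub_cancel_right, sum_Ico_comp_add_one] at hD'
    rw [sum_Icc_zero_eq_add_add b (by omega), add_tsub_cancel_right,
      sum_Ico_eq_add_sum_Ico a (by omega)]
    simp only [Nat.reduceAdd] at hD' ⊢
    omega

theorem trapezoid_weight_top_of_tail (ht : IsCombPath k ν N (fun i => a (i + 1)) (tailB b))
    (hb0 : b 0 = 0) (hν : l + b 1 ≤ ν + a 0) :
    l + ∑ s ∈ Icc 0 (N + 1), b s + k ≤ k + ∑ s ∈ Icc 0 (N + 1), a s := by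
  obtain ⟨-, -, -, -, -, -, -, -, -, -, -, hF⟩ := ht
  rw [sum_Icc_zero_tailB, sum_Icc_comp_add_one, sum_Icc_eq_add_sum_Icc a (by omega)] at hF
  rw [sum_Icc_zero_eq_add_add b (by omega), sum_Icc_zero_eq_add_add a (by omega)]
  simp only [Nat.reduceAdd] at hF ⊢
  omega

theorem of_tail (hN : 1 ≤ N) (ht : IsCombPath k ν N (fun i => a (i + 1)) (tailB b))
    (hb0 : b 0 = 0) (ha0 : a 0 ≤ l) (hl : l + b 1 ≤ k) (h0 : a 0 + b 1 + a 1 ≤ k)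
    (hν₁ : b 1 + a 1 ≤ ν) (hν₂ : l + b 1 ≤ ν + a 0) : IsCombPath k l (N + 1) a b := by
  refine ⟨fun i => ?_, fun i => ?_, hb0, fun i hi => ?_, fun i hi => ?_, ha0,
    fun i => ?_, fun i => ?_, fun i j hij => ?_, trapezoid_weight_of_tail ht hb0 hl hν₂,
    fun i => ?_, trapezoid_weight_top_of_tail ht hb0 hν₂⟩
  all_goals obtain ⟨ha, hb, -, hav, hbv, -, h7, h8, hC, hD, hE, -⟩ := id ht
  · rcases i with _ | i
    · omega
    · exact ha i
  · rcases i with _ | _ | i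
    · omega
    · simp only [zero_add]; omega
    · exact hb (i + 1)
  · obtain ⟨i, rfl⟩ : ∃ i', i = i' + 1 := ⟨i - 1, by omega⟩
    exact hav i (by omega)
  · obtain ⟨i, rfl⟩ : ∃ i', i = i' + 2 := ⟨i - 2, by omega⟩
    exact hbv (i + 1) (by omega)
  · rcases i with _ | i
    · exact h0
    · simpa [tailB] using h7 i
  · rcases i with _ | _ | i
    · simp only [zero_add]; omega
    · have hD₁ : ν + b 2 ≤ k := by simpa [sum_Icc_zero_tailB] using hD 1
      show b 1 + a 1 + b 2 ≤ k
      omega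
    · simpa [tailB] using h8 (i + 1)
  · by_cases hi : i ≤ 1
    · exact trapezoid_of_tail ht hb0 hν₁ hi hij
    · obtain ⟨i, rfl⟩ : ∃ i', i = i' + 1 + 1 := ⟨i - 2, by omega⟩
      obtain ⟨j, rfl⟩ : ∃ j', j = j' + 1 + 1 := ⟨j - 2, by omega⟩
      simpa [sum_Icc_succ_tailB, sum_Ico_comp_add_one (f := a)] using hC (i + 1) (j + 1) (by omega)
  · by_cases hi : i ≤ 1
    · exact trapezoid_top_of_tail ht hb0 hν₁ hi
    · obtain ⟨i, rfl⟩ : ∃ i', i = i' + 1 + 1 := ⟨i - 2, by omega⟩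
      simpa only [sum_Icc_succ_tailB, sum_Icc_comp_add_one (f := a)] using hE (i + 1)

theorem concat {l'' l' : ℕ} (hN : 1 ≤ N) (hT : IsAdm k l l'' l') (h : IsCombPath k l' N a b) :
    IsCombPath k l (N + 1) (concatC l l'' l' a b).1 (concatC l l'' l' a b).2 := by
  have hb : tailB (concatC l l'' l' a b).2 = b := by
    funext i
    rcases i with _ | i
    · exact h.b_zero.symm
    · rfl
  have := hT.decomp
  have := h.a_zero_le
  refine of_tail hN (ν := l') (by rwa [hb]) ?_ ?_ ?_ ?_ ?_ ?_ <;>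
    simp only [concatC_fst_zero, concatC_fst_add_one, concatC_snd_zero, concatC_snd_one] <;> omega

theorem exists_eq_concatC (hN : 1 ≤ N) (h : IsCombPath k l (N + 1) a b) :
    ∃ l'' l' a' b', IsAdm k l l'' l' ∧ IsCombPath k l' N a' b' ∧
      concatC l l'' l' a' b' = (a, b) := by
  have hl := h.weight_add_b_one_le
  have ha0 := h.a_zero_le
  obtain ⟨-, -, -, -, -, -, h7, -⟩ := id h
  have h7₀ : a 0 + b 1 + a 1 ≤ k := h7 0
  obtain ⟨x, z, hx, hz⟩ : ∃ x z, x = l - a 0 ∧ z = b 1 + max x (a 1) - x := ⟨_, _, rfl, rfl⟩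
  have hxA : xA l (a 0 + z) (x + z) = x := by unfold xA; omega
  have hyA : yA l (a 0 + z) (x + z) = a 0 := by unfold yA; omega
  have hzA : zA l (a 0 + z) (x + z) = z := by unfold zA; omega
  refine ⟨a 0 + z, x + z, fun i => a (i + 1), tailB b,
    ⟨x, a 0, z, by omega, by omega, rfl, rfl⟩, ?_, ?_⟩
  · rw [show x + z = b 1 + max (l - a 0) (a 1) by omega]
    exact h.tail hN
  · refine Prod.ext (funext fun i => ?_) (funext fun i => ?_)
    · rcases i with _ | i
      · exact hyA
      · rfl
    · rcases i with _ | _ | i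
      · exact h.b_zero.symm
      · simp only [zero_add, concatC_snd_one, hxA, hzA]
        omega
      · rfl

theorem exists_split {k₁ k₂ : ℕ} (hN : 1 ≤ N) :
    ∀ {w₁ w₂ p₁ p₂ : ℕ} {a b : ℕ → ℕ}, w₁ ≤ k₁ → w₂ ≤ k₂ → p₁ ≤ w₁ → p₂ ≤ w₂ →
      IsCombPath (k₁ + k₂) (w₁ + w₂) N a b →
      ∃ a₁ b₁ a₂ b₂, IsCombPath k₁ w₁ N a₁ b₁ ∧ IsCombPath k₂ w₂ N a₂ b₂ ∧
        a₁ + a₂ = a ∧ b₁ + b₂ = b ∧ ((p₁ ≤ a₁ 0 ∧ p₂ ≤ a₂ 0) ∨ (a₁ 0 ≤ p₁ ∧ a₂ 0 ≤ p₂)) := by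
  induction N, hN using Nat.le_induction with
  | base =>
    intro w₁ w₂ p₁ p₂ a b hw₁ hw₂ hp₁ hp₂ h
    obtain ⟨rfl, rfl⟩ := h.eq_single_of_length_one
    exact ⟨_, 0, _, 0, single hw₁, single hw₂, by rw [Pi.single_add], add_zero 0,
      Or.inl (by simpa using ⟨hp₁, hp₂⟩)⟩
  | succ N hN ih =>
    intro w₁ w₂ p₁ p₂ a b hw₁ hw₂ hp₁ hp₂ h
    obtain ⟨l'', l', a', b', hT, h', hab⟩ := h.exists_eq_concatC hN
    obtain ⟨β₁, γ₁, β₂, γ₂, hT₁, hT₂, rfl, rfl, hside⟩ := hT.exists_split hw₁ hw₂ hp₁ hp₂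
    have := hT₁.decomp; have := hT₂.decomp
    obtain ⟨a₁, b₁, a₂, b₂, h₁, h₂, rfl, rfl, hside'⟩ :=
      ih (p₁ := xA w₁ β₁ γ₁) (p₂ := xA w₂ β₂ γ₂) (by omega) (by omega) (by omega) (by omega) h'
    have hsum := concatC_add_concatC (b₁ := b₁) (b₂ := b₂) hT₁ hT₂ h₁.a_zero_le h₂.a_zero_le hside'
    rw [hab] at hsum
    exact ⟨_, _, _, _, h₁.concat hN hT₁, h₂.concat hN hT₂, congrArg Prod.fst hsum,
      congrArg Prod.snd hsum, hside⟩

end IsCombPath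

theorem stmt_2_general (k₁ k₂ N : ℕ) (hN : 1 ≤ N) :
    (∀ l₁ l₂, l₁ ≤ k₁ → l₂ ≤ k₂ →
      (∀ a₁ b₁ a₂ b₂, IsCombPath k₁ l₁ N a₁ b₁ → IsCombPath k₂ l₂ N a₂ b₂ →
        IsCombPath (k₁ + k₂) (l₁ + l₂) N (a₁ + a₂) (b₁ + b₂)) ∧
      (∀ a b, IsCombPath (k₁ + k₂) (l₁ + l₂) N a b →
        ∃ a₁ b₁ a₂ b₂, IsCombPath k₁ l₁ N a₁ b₁ ∧ IsCombPath k₂ l₂ N a₂ b₂ ∧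
          a = a₁ + a₂ ∧ b = b₁ + b₂)) ∧
    (∀ l l'' l' lA lA'' lA' lB lB'' lB' : ℕ,
      l = lA + lB → l'' = lA'' + lB'' → l' = lA' + lB' →
      IsAdm (k₁ + k₂) l l'' l' → IsAdm k₁ lA lA'' lA' → IsAdm k₂ lB lB'' lB' →
      ∀ a b, IsCombPath (k₁ + k₂) l' N a b →
      ∃ aA bA aB bB, IsCombPath k₁ lA' N aA bA ∧ IsCombPath k₂ lB' N aB bB ∧
        aA + aB = a ∧ bA + bB = b ∧
        (concatC lA lA'' lA' aA bA).1 + (concatC lB lB'' lB' aB bB).1 =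
          (concatC l l'' l' a b).1 ∧
        (concatC lA lA'' lA' aA bA).2 + (concatC lB lB'' lB' aB bB).2 =
          (concatC l l'' l' a b).2) := by
  refine ⟨fun l₁ l₂ hl₁ hl₂ => ⟨fun _ _ _ _ => IsCombPath.add, fun a b h => ?_⟩, ?_⟩
  · obtain ⟨a₁, b₁, a₂, b₂, h₁, h₂, rfl, rfl, -⟩ :=
      IsCombPath.exists_split hN hl₁ hl₂ (Nat.zero_le l₁) (Nat.zero_le l₂) h
    exact ⟨a₁, b₁, a₂, b₂, h₁, h₂, rfl, rfl⟩
  · rintro l l'' l' lA lA'' lA' lB lB'' lB' rfl rfl rfl - hA hB a b h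
    have := hA.decomp; have := hB.decomp
    obtain ⟨aA, bA, aB, bB, h₁, h₂, rfl, rfl, hside⟩ :=
      IsCombPath.exists_split hN (p₁ := xA lA lA'' lA') (p₂ := xA lB lB'' lB')
        (by omega) (by omega) (by omega) (by omega) h
    have hsum := concatC_add_concatC (b₁ := bA) (b₂ := bB) hA hB h₁.a_zero_le h₂.a_zero_le hside
    exact ⟨aA, bA, aB, bB, h₁, h₂, rfl, rfl, congrArg Prod.fst hsum, congrArg Prod.snd hsum⟩

/-- The componentwise addition map
`m_C : C^{(N)}_{k₁,l₁} × C^{(N)}_{k₂,l₂} → C^{(N)}_{k₁+k₂,l₁+l₂}` is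
well-defined and surjective; moreover any decomposition of an admissible
triple of level `k₁+k₂` into admissible triples of levels `k₁`, `k₂` can be
matched by a decomposition of a combinatorial path which is compatible with
the concatenation maps. -/
theorem stmt_2 (k₁ k₂ N : ℕ) (hk₁ : 1 ≤ k₁) (hk₂ : 1 ≤ k₂) (hN : 1 ≤ N) :
    (∀ l₁ l₂, l₁ ≤ k₁ → l₂ ≤ k₂ →
      (∀ a₁ b₁ a₂ b₂, IsCombPath k₁ l₁ N a₁ b₁ → IsCombPath k₂ l₂ N a₂ b₂ →
        IsCombPath (k₁ + k₂) (l₁ + l₂) N (a₁ + a₂) (b₁ + b₂)) ∧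
      (∀ a b, IsCombPath (k₁ + k₂) (l₁ + l₂) N a b →
        ∃ a₁ b₁ a₂ b₂, IsCombPath k₁ l₁ N a₁ b₁ ∧ IsCombPath k₂ l₂ N a₂ b₂ ∧
          a = a₁ + a₂ ∧ b = b₁ + b₂)) ∧
    (∀ l l'' l' lA lA'' lA' lB lB'' lB' : ℕ,
      l = lA + lB → l'' = lA'' + lB'' → l' = lA' + lB' →
      IsAdm (k₁ + k₂) l l'' l' → IsAdm k₁ lA lA'' lA' → IsAdm k₂ lB lB'' lB' →
      ∀ a b, IsCombPath (k₁ + k₂) l' N a b →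
      ∃ aA bA aB bB, IsCombPath k₁ lA' N aA bA ∧ IsCombPath k₂ lB' N aB bB ∧
        aA + aB = a ∧ bA + bB = b ∧
        (concatC lA lA'' lA' aA bA).1 + (concatC lB lB'' lB' aB bB).1 =
          (concatC l l'' l' a b).1 ∧
        (concatC lA lA'' lA' aA bA).2 + (concatC lB lB'' lB' aB bB).2 =
          (concatC l l'' l' a b).2) :=
  stmt_2_general k₁ k₂ N hN
end

section
/- For every (a;b) ∈ C^{(N)}_{k,l} with k ≥ 1, there exist integers l₁,…,l_k ∈ {0,1} with l₁ + ⋯ + l_k = l and combinatorial paths (a_j;b_j) ∈ C^{(N)}_{1,l_j} for j = 1,…,k such that Σ_{j=1}^k (a_j;b_j) = (a;b) (componentwise sum). -/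
/-!
Colour the units of `a` and `b` with `k` colours, one per summand, greedily by increasing index.
A colour is *pending* from the moment it carries a `b` until it next carries an `a`. At index `q`
the `b q` new `b`'s go to colours that are neither pending nor carried an `a` at `q - 1`; the `a q`
`a`'s close pending colours first and go to unconstrained colours only after that. Each colour
then satisfies local rules from which its level-one trapezoid conditions follow by telescoping.
The greedy choices are possible because the number of pending colours follows
`p (q + 1) = p q - a q + b q`, a max-plus recursion whose value is always one of the trapezoid
sums of the level-`k` path, and those are bounded by `k`.
-/

open Finset

section LevelOne

variable {N : ℕ} {a b p : ℕ → ℕ}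

lemma pend_add_sum_Ico_le (hcons : ∀ q, p q + b q ≤ a q + p (q + 1)) {m n : ℕ}
    (hmn : m ≤ n) :
    p m + ∑ s ∈ Ico m n, b s ≤ ∑ s ∈ Ico m n, a s + p n := by
  induction n, hmn using Nat.le_induction with
  | base => simp
  | succ n hmn ih =>
    rw [sum_Ico_succ_top hmn, sum_Ico_succ_top hmn]
    linarith [hcons n]

lemma sum_Ico_le_sum_Ico_succ_add_pend (hcons : ∀ q, p q + b q ≤ a q + p (q + 1))
    (hbab : ∀ q, b q + a q + b (q + 1) ≤ 1) {m n : ℕ} (hmn : m ≤ n) :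
    ∑ s ∈ Ico m n, b s ≤ ∑ s ∈ Ico (m + 1) n, a s + p n := by
  rcases hmn.eq_or_lt with rfl | hlt
  · simp
  rw [sum_eq_sum_Ico_succ_bot hlt]
  have := pend_add_sum_Ico_le hcons hlt
  linarith [hcons m, hbab m]

/-- `p q = 1` marks a `b` before index `q` (the initial weight counting as one at index `-1`)
whose closing `a` has not come yet; `hcons` says marks are created by `b`'s and removed only
by `a`'s. -/
theorem isCombPath_one_of_local (hcons : ∀ q, p q + b q ≤ a q + p (q + 1))
    (hpbb : ∀ q, p q + b q + b (q + 1) ≤ 1) (haba : ∀ q, a q + b (q + 1) + a (q + 1) ≤ 1)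
    (hbab : ∀ q, b q + a q + b (q + 1) ≤ 1) (ha0 : a 0 ≤ p 0) (hb0 : b 0 = 0)
    (haN : ∀ q, N ≤ q → a q = 0) (hbN : ∀ q, N ≤ q → b q = 0) (hpN : p N = 0) :
    IsCombPath 1 (p 0) N a b := by
  have hsplit (f : ℕ → ℕ) {i n : ℕ} (h : i ≤ n) :
      ∑ s ∈ Icc i (n + 1), f s = ∑ s ∈ Ico i n, f s + f n + f (n + 1) := by
    rw [sum_Icc_succ_top (by omega), Icc_eq_cons_Ico h, sum_cons]; ring
  refine ⟨fun q => by linarith [haba q], fun q => by linarith [hbab q], hb0, haN, hbN, ha0, haba,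
    hbab, ?_, ?_, ?_, ?_⟩
  · intro i j hij
    obtain ⟨n, rfl⟩ : ∃ n, j = n + 1 := ⟨j - 1, by omega⟩
    rw [hsplit b (by omega), Nat.add_sub_cancel]
    linarith [sum_Ico_le_sum_Ico_succ_add_pend hcons hbab (show i ≤ n by omega), hpbb n]
  · rintro (_ | n)
    · have := hpbb 0
      simp only [Icc_self, sum_singleton, zero_tsub, Ico_self, sum_empty]
      omega
    · rw [hsplit b n.zero_le, Nat.add_sub_cancel]
      linarith [pend_add_sum_Ico_le hcons n.zero_le, hpbb n]
  · intro i
    rcases le_or_gt i N with hiN | hNi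
    · have := sum_Ico_le_sum_Ico_succ_add_pend hcons hbab hiN
      have := sum_le_sum_of_subset (f := a) (Ico_subset_Icc_self (a := i + 1) (b := N))
      rw [Icc_eq_cons_Ico hiN, sum_cons, hbN N le_rfl]
      omega
    · simp [Icc_eq_empty_of_lt hNi]
  · have := pend_add_sum_Ico_le hcons N.zero_le
    rw [Icc_eq_cons_Ico N.zero_le, sum_cons, sum_cons, hbN N le_rfl, haN N le_rfl]
    omega

end LevelOne

section PendingCount

def pendingCount (l : ℕ) (a b : ℕ → ℕ) : ℕ → ℕ
  | 0 => l
  | q + 1 => pendingCount l a b q - a q + b q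

variable {k l N : ℕ} {a b : ℕ → ℕ}

/-- The max-plus recursion always takes the value of one of its candidates: the sum starting at
the initial weight `l`, or the one starting at a `b` at index `m`. -/
lemma pendingCount_attained (t : ℕ) :
    pendingCount l a b t + ∑ s ∈ Ico 0 t, a s = l + ∑ s ∈ Ico 0 t, b s ∨
      ∃ m < t, pendingCount l a b t + ∑ s ∈ Ico (m + 1) t, a s = ∑ s ∈ Ico m t, b s := by
  induction t with
  | zero => simp [pendingCount]
  | succ t ih =>
    simp only [pendingCount]
    rcases le_or_gt (a t) (pendingCount l a b t) with hle | hlt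
    · rcases ih with ih | ⟨m, hm, ih⟩
      · left
        rw [sum_Ico_succ_top t.zero_le, sum_Ico_succ_top t.zero_le]
        omega
      · right
        refine ⟨m, by omega, ?_⟩
        rw [sum_Ico_succ_top (show m + 1 ≤ t from hm), sum_Ico_succ_top hm.le]
        omega
    · right
      refine ⟨t, t.lt_succ_self, ?_⟩
      simp only [Ico_self, sum_empty, sum_Ico_succ_top le_rfl]
      omega

lemma IsCombPath.pendingCount_succ_add_le (h : IsCombPath k l N a b) (s : ℕ) :
    pendingCount l a b (s + 1) + a s + b (s + 1) ≤ k := by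
  obtain ⟨-, -, -, -, -, -, -, hbab, htrap, htrap₀, -, -⟩ := h
  rcases pendingCount_attained (l := l) (a := a) (b := b) (s + 1) with h | ⟨m, hm, h⟩
  · have := htrap₀ (s + 1)
    rw [Icc_eq_cons_Ico (by omega), sum_cons, Nat.add_sub_cancel] at this
    rw [sum_Ico_succ_top s.zero_le] at h
    omega
  · rcases (Nat.lt_succ_iff.mp hm).eq_or_lt with rfl | hms
    · have := hbab m
      simp only [Ico_self, sum_empty, sum_Ico_succ_top le_rfl] at h
      omega
    · have := htrap m (s + 1) hm
      rw [Icc_eq_cons_Ico hm.le, sum_cons, Nat.add_sub_cancel] at this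
      rw [sum_Ico_succ_top (show m + 1 ≤ s from hms)] at h
      omega

lemma IsCombPath.pendingCount_eq_zero (h : IsCombPath k l N a b) : pendingCount l a b N = 0 := by
  obtain ⟨-, -, -, haN, hbN, -, -, -, -, -, hfin, hfin₀⟩ := h
  rcases pendingCount_attained (l := l) (a := a) (b := b) N with h | ⟨m, hm, h⟩
  · rw [Icc_eq_cons_Ico N.zero_le, sum_cons, sum_cons, haN N le_rfl, hbN N le_rfl] at hfin₀
    omega
  · have := hfin m
    rw [Icc_eq_cons_Ico hm.le, Icc_eq_cons_Ico hm, sum_cons, sum_cons, haN N le_rfl,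
      hbN N le_rfl] at this
    omega

end PendingCount

section Pick

variable {α : Type*}

/-- Junk value `s` when `s` has fewer than `n` elements. -/
noncomputable def pick (s : Finset α) (n : ℕ) : Finset α :=
  if h : n ≤ #s then (exists_subset_card_eq h).choose else s

lemma pick_subset (s : Finset α) (n : ℕ) : pick s n ⊆ s := by
  unfold pick
  split_ifs with h
  exacts [(exists_subset_card_eq h).choose_spec.1, subset_rfl]

lemma card_pick {s : Finset α} {n : ℕ} (h : n ≤ #s) : #(pick s n) = n := by
  rw [pick, dif_pos h]
  exact (exists_subset_card_eq h).choose_spec.2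

end Pick

/-- State of the greedy colouring before an index: `pend` holds the colours whose last `b` still
awaits its `a`, `prev` the colours that carried an `a` at the previous index. -/
structure Greedy (k : ℕ) where
  pend : Finset (Fin k)
  prev : Finset (Fin k)

namespace Greedy

variable {k : ℕ} (σ : Greedy k) (a b : ℕ)

noncomputable def bSet : Finset (Fin k) := pick (σ.pend ∪ σ.prev)ᶜ b

noncomputable def closeSet : Finset (Fin k) := pick σ.pend (min a #σ.pend)

noncomputable def openSet : Finset (Fin k) :=
  pick (σ.pend ∪ σ.prev ∪ σ.bSet b)ᶜ (a - #σ.pend)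

noncomputable def aSet : Finset (Fin k) := σ.closeSet a ∪ σ.openSet a b

noncomputable def next : Greedy k := ⟨(σ.pend \ σ.closeSet a) ∪ σ.bSet b, σ.aSet a b⟩

variable {σ a b} {x : Fin k}

lemma closeSet_subset_pend : σ.closeSet a ⊆ σ.pend := pick_subset _ _

lemma notMem_of_mem_bSet (hx : x ∈ σ.bSet b) : x ∉ σ.pend ∧ x ∉ σ.prev := by
  simpa using pick_subset _ _ hx

lemma notMem_of_mem_openSet (hx : x ∈ σ.openSet a b) :
    x ∉ σ.pend ∧ x ∉ σ.prev ∧ x ∉ σ.bSet b := by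
  simpa [or_assoc] using pick_subset _ _ hx

lemma notMem_bSet_of_mem_aSet (hx : x ∈ σ.aSet a b) : x ∉ σ.bSet b := by
  rcases mem_union.mp hx with hx | hx
  · exact fun hb => (notMem_of_mem_bSet hb).1 (closeSet_subset_pend hx)
  · exact (notMem_of_mem_openSet hx).2.2

lemma notMem_prev_of_mem_aSet (hσ : Disjoint σ.pend σ.prev) (hx : x ∈ σ.aSet a b) :
    x ∉ σ.prev := by
  rcases mem_union.mp hx with hx | hx
  · exact disjoint_left.mp hσ (closeSet_subset_pend hx)
  · exact (notMem_of_mem_openSet hx).2.1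

lemma mem_next_pend_of_mem_bSet (hx : x ∈ σ.bSet b) : x ∈ (σ.next a b).pend :=
  mem_union_right _ hx

lemma mem_aSet_or_mem_next_pend (hx : x ∈ σ.pend) :
    x ∈ σ.aSet a b ∨ x ∈ (σ.next a b).pend := by
  by_cases hc : x ∈ σ.closeSet a
  · exact .inl (mem_union_left _ hc)
  · exact .inr (mem_union_left _ (mem_sdiff.mpr ⟨hx, hc⟩))

lemma disjoint_next : Disjoint (σ.next a b).pend (σ.next a b).prev := by
  refine disjoint_left.mpr fun x hx ha => ?_
  rcases mem_union.mp hx with hx | hx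
  · rcases mem_union.mp ha with ha | ha
    · exact (mem_sdiff.mp hx).2 ha
    · exact (notMem_of_mem_openSet ha).1 (mem_sdiff.mp hx).1
  · exact notMem_bSet_of_mem_aSet ha hx

lemma card_bSet (hσ : Disjoint σ.pend σ.prev) (h : #σ.pend + #σ.prev + b ≤ k) :
    #(σ.bSet b) = b := by
  refine card_pick ?_
  rw [card_compl, card_union_of_disjoint hσ, Fintype.card_fin]
  omega

lemma card_closeSet : #(σ.closeSet a) = min a #σ.pend := card_pick (min_le_right _ _)

lemma card_aSet (hσ : Disjoint σ.pend σ.prev) (h : #σ.pend + #σ.prev + b ≤ k)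
    (h' : #σ.prev + b + a ≤ k) : #(σ.aSet a b) = a := by
  have hdisj : Disjoint (σ.pend ∪ σ.prev) (σ.bSet b) :=
    disjoint_right.mpr fun _ hx => by simpa using notMem_of_mem_bSet hx
  have hopen : #(σ.openSet a b) = a - #σ.pend := by
    refine card_pick ?_
    rw [card_compl, card_union_of_disjoint hdisj, card_union_of_disjoint hσ, card_bSet hσ h,
      Fintype.card_fin]
    omega
  rw [aSet, card_union_of_disjoint, card_closeSet, hopen]
  · omega
  · exact disjoint_right.mpr fun _ hx hc => (notMem_of_mem_openSet hx).1 (closeSet_subset_pend hc)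

lemma card_next_pend (hσ : Disjoint σ.pend σ.prev) (h : #σ.pend + #σ.prev + b ≤ k) :
    #(σ.next a b).pend = #σ.pend - a + b := by
  have hdisj : Disjoint (σ.pend \ σ.closeSet a) (σ.bSet b) :=
    disjoint_right.mpr fun _ hx hp => (notMem_of_mem_bSet hx).1 (mem_sdiff.mp hp).1
  rw [next, card_union_of_disjoint hdisj, card_sdiff_of_subset closeSet_subset_pend, card_closeSet,
    card_bSet hσ h]
  omega

lemma aSet_subset_pend (h : a ≤ #σ.pend) : σ.aSet a b ⊆ σ.pend := by
  have hopen : σ.openSet a b = ∅ := by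
    rw [← card_eq_zero, openSet, card_pick] <;> omega
  rw [aSet, hopen, union_empty]
  exact closeSet_subset_pend

end Greedy

section Strands

variable (k l : ℕ) (a b : ℕ → ℕ)

noncomputable def greedy : ℕ → Greedy k
  | 0 => ⟨pick univ l, ∅⟩
  | q + 1 => (greedy q).next (a q) (b q)

noncomputable def strandP (x : Fin k) (q : ℕ) : ℕ :=
  if x ∈ (greedy k l a b q).pend then 1 else 0

noncomputable def strandA (x : Fin k) (q : ℕ) : ℕ :=
  if x ∈ (greedy k l a b q).aSet (a q) (b q) then 1 else 0

noncomputable def strandB (x : Fin k) (q : ℕ) : ℕ :=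
  if x ∈ (greedy k l a b q).bSet (b q) then 1 else 0

variable {k l a b}

open Greedy

lemma disjoint_greedy : ∀ q, Disjoint (greedy k l a b q).pend (greedy k l a b q).prev
  | 0 => disjoint_empty_right _
  | _ + 1 => disjoint_next

lemma greedy_succ (q : ℕ) : greedy k l a b (q + 1) = (greedy k l a b q).next (a q) (b q) := rfl

lemma strandP_add_strandB_le (x : Fin k) (q : ℕ) :
    strandP k l a b x q + strandB k l a b x q ≤
      strandA k l a b x q + strandP k l a b x (q + 1) := by
  simp only [strandP, strandA, strandB, greedy_succ]
  set σ := greedy k l a b q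
  have h₁ : x ∈ σ.bSet (b q) → x ∈ (σ.next (a q) (b q)).pend := mem_next_pend_of_mem_bSet
  have h₂ : x ∈ σ.pend → x ∈ σ.aSet (a q) (b q) ∨ x ∈ (σ.next (a q) (b q)).pend :=
    mem_aSet_or_mem_next_pend
  have h₃ : x ∈ σ.bSet (b q) → x ∉ σ.pend := fun hx => (notMem_of_mem_bSet hx).1
  split_ifs <;> grind

lemma strandP_add_strandB_add_strandB_succ_le (x : Fin k) (q : ℕ) :
    strandP k l a b x q + strandB k l a b x q + strandB k l a b x (q + 1) ≤ 1 := by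
  simp only [strandP, strandB, greedy_succ]
  set σ := greedy k l a b q
  set σ' := σ.next (a q) (b q)
  have h₁ : x ∈ σ.bSet (b q) → x ∈ σ'.pend := mem_next_pend_of_mem_bSet
  have h₂ : x ∈ σ.pend → x ∈ σ.aSet (a q) (b q) ∨ x ∈ σ'.pend :=
    mem_aSet_or_mem_next_pend
  have h₃ : x ∈ σ.bSet (b q) → x ∉ σ.pend := fun hx => (notMem_of_mem_bSet hx).1
  have h₄ : x ∈ σ'.bSet (b (q + 1)) → x ∉ σ'.pend ∧ x ∉ σ.aSet (a q) (b q) :=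
    notMem_of_mem_bSet
  split_ifs <;> grind

lemma strandA_add_strandB_succ_add_strandA_succ_le (x : Fin k) (q : ℕ) :
    strandA k l a b x q + strandB k l a b x (q + 1) + strandA k l a b x (q + 1) ≤ 1 := by
  simp only [strandA, strandB, greedy_succ]
  set σ := greedy k l a b q
  set σ' := σ.next (a q) (b q)
  have h₁ : x ∈ σ'.bSet (b (q + 1)) → x ∉ σ.aSet (a q) (b q) :=
    fun hx => (notMem_of_mem_bSet hx).2
  have h₂ : x ∈ σ'.aSet (a (q + 1)) (b (q + 1)) → x ∉ σ.aSet (a q) (b q) :=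
    notMem_prev_of_mem_aSet disjoint_next
  have h₃ : x ∈ σ'.aSet (a (q + 1)) (b (q + 1)) → x ∉ σ'.bSet (b (q + 1)) :=
    notMem_bSet_of_mem_aSet
  split_ifs <;> grind

lemma strandB_add_strandA_add_strandB_succ_le (x : Fin k) (q : ℕ) :
    strandB k l a b x q + strandA k l a b x q + strandB k l a b x (q + 1) ≤ 1 := by
  simp only [strandA, strandB, greedy_succ]
  set σ := greedy k l a b q
  set σ' := σ.next (a q) (b q)
  have h₁ : x ∈ σ.bSet (b q) → x ∈ σ'.pend := mem_next_pend_of_mem_bSet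
  have h₂ : x ∈ σ.aSet (a q) (b q) → x ∉ σ.bSet (b q) := notMem_bSet_of_mem_aSet
  have h₃ : x ∈ σ'.bSet (b (q + 1)) → x ∉ σ'.pend ∧ x ∉ σ.aSet (a q) (b q) :=
    notMem_of_mem_bSet
  split_ifs <;> grind

end Strands

section Decomposition

variable {k l N : ℕ} {a b : ℕ → ℕ}

open Greedy

lemma IsCombPath.card_greedy (h : IsCombPath k l N a b) (q : ℕ) :
    #(greedy k l a b q).pend = pendingCount l a b q ∧
      #(greedy k l a b q).pend + #(greedy k l a b q).prev + b q ≤ k ∧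
      #(greedy k l a b q).prev + b q + a q ≤ k := by
  have hpending := h.pendingCount_succ_add_le
  obtain ⟨hak, -, hb0, -, -, -, haba, -, -, htrap₀, -, -⟩ := h
  induction q with
  | zero =>
    have hlk : l ≤ k := by simpa [hb0] using htrap₀ 0
    have hpick : #(pick (univ : Finset (Fin k)) l) = l := card_pick (by simpa using hlk)
    simp [greedy, pendingCount, hpick, hb0, hlk, hak 0]
  | succ q ih =>
    obtain ⟨hpend, hfit, hfit'⟩ := ih
    have hprev' : #(greedy k l a b (q + 1)).prev = a q := card_aSet (disjoint_greedy q) hfit hfit'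
    have hpend' : #(greedy k l a b (q + 1)).pend = pendingCount l a b (q + 1) := by
      rw [greedy, card_next_pend (disjoint_greedy q) hfit, hpend, pendingCount]
    rw [hprev', hpend']
    exact ⟨rfl, hpending q, haba q⟩

lemma IsCombPath.card_greedy_aSet (h : IsCombPath k l N a b) (q : ℕ) :
    #((greedy k l a b q).aSet (a q) (b q)) = a q :=
  card_aSet (disjoint_greedy q) (h.card_greedy q).2.1 (h.card_greedy q).2.2

lemma IsCombPath.card_greedy_bSet (h : IsCombPath k l N a b) (q : ℕ) :
    #((greedy k l a b q).bSet (b q)) = b q :=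
  card_bSet (disjoint_greedy q) (h.card_greedy q).2.1

lemma IsCombPath.isCombPath_strand (h : IsCombPath k l N a b) (x : Fin k) :
    IsCombPath 1 (strandP k l a b x 0) N (strandA k l a b x) (strandB k l a b x) := by
  obtain ⟨-, -, hb0, haN, hbN, ha0l, -⟩ := id h
  have ha0 : (greedy k l a b 0).aSet (a 0) (b 0) ⊆ (greedy k l a b 0).pend :=
    aSet_subset_pend (by rwa [(h.card_greedy 0).1])
  have hpN : (greedy k l a b N).pend = ∅ := by
    rw [← card_eq_zero, (h.card_greedy N).1, h.pendingCount_eq_zero]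
  refine isCombPath_one_of_local (strandP_add_strandB_le x)
    (strandP_add_strandB_add_strandB_succ_le x) (strandA_add_strandB_succ_add_strandA_succ_le x)
    (strandB_add_strandA_add_strandB_succ_le x) ?_ ?_ (fun q hq => ?_) (fun q hq => ?_) ?_
  · unfold strandA strandP
    split_ifs with hA hP <;> first | omega | exact absurd (ha0 hA) hP
  · rw [strandB, card_eq_zero.mp ((h.card_greedy_bSet 0).trans hb0)]
    simp
  · rw [strandA, card_eq_zero.mp ((h.card_greedy_aSet q).trans (haN q hq))]
    simp
  · rw [strandB, card_eq_zero.mp ((h.card_greedy_bSet q).trans (hbN q hq))]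
    simp
  · simp [strandP, hpN]

end Decomposition

theorem stmt_3_general (k l N : ℕ) (a b : ℕ → ℕ) (h : IsCombPath k l N a b) :
    ∃ (lv : Fin k → ℕ) (av bv : Fin k → ℕ → ℕ),
      (∀ j, lv j ≤ 1) ∧ (∑ j, lv j) = l ∧
      (∀ j, IsCombPath 1 (lv j) N (av j) (bv j)) ∧
      (∀ i, (∑ j, av j i) = a i) ∧ (∀ i, (∑ j, bv j i) = b i) := by
  refine ⟨fun x => strandP k l a b x 0, strandA k l a b, strandB k l a b, fun x => ?_, ?_,
    h.isCombPath_strand, fun q => ?_, fun q => ?_⟩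
  · show ite _ _ _ ≤ 1
    split_ifs <;> omega
  · simp [strandP, (h.card_greedy 0).1, pendingCount]
  · simp [strandA, h.card_greedy_aSet q]
  · simp [strandB, h.card_greedy_bSet q]

/-- Every combinatorial path of level `k` is a componentwise sum of `k`
combinatorial paths of level `1`, with weights `l_j ∈ {0,1}` summing to `l`. -/
theorem stmt_3 (k l N : ℕ) (hk : 1 ≤ k) (hl : l ≤ k) (hN : 1 ≤ N)
    (a b : ℕ → ℕ) (h : IsCombPath k l N a b) :
    ∃ (lv : Fin k → ℕ) (av bv : Fin k → ℕ → ℕ),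
      (∀ j, lv j ≤ 1) ∧ (∑ j, lv j) = l ∧
      (∀ j, IsCombPath 1 (lv j) N (av j) (bv j)) ∧
      (∀ i, (∑ j, av j i) = a i) ∧ (∀ i, (∑ j, bv j i) = b i) :=
  stmt_3_general k l N a b h
end

section
/- Let N ≥ 2 and let (α;β) = (α₁,…,α_N; β₁,…,β_{N−1}) be a Verlinde path of length N, level k and weight α₁. Then the reversed tuple (ᾱ;β̄) = (α_N, α_{N−1}, …, α₁; β_{N−1}, …, β₁) is a Verlinde path of length N, level k and weight α_N, and with l = α₁, l' = α_N, i = (α₁ + β₁ − α₂)/2, i' = (α_N + β_{N−1} − α_{N−1})/2, the gradings satisfy: e(ᾱ;β̄) + e(α;β) = (N−1)(s₂(α;β) + l − i); s₁(ᾱ;β̄) + l' − i' = s₁(α;β) + l − i; and s₂(ᾱ;β̄) + l' − i' = s₂(α;β) + l − i. -/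
/-- `α, β : ℕ → ℕ` represent a Verlinde path `(α₁,…,α_N; β₁,…,β_{N-1})` of
length `N`, level `k` and weight `l`: the values at `0` are dummy zeros, and
the conventions `β_N = α_N`, `α_i = β_i = 0` for `i > N` are imposed. -/
def IsVerPath (k l N : ℕ) (α β : ℕ → ℕ) : Prop :=
  α 0 = 0 ∧ β 0 = 0 ∧ α 1 = l ∧ β N = α N ∧
  (∀ i, N < i → α i = 0) ∧ (∀ i, N < i → β i = 0) ∧
  (∀ i, 1 ≤ i → IsAdm k (α i) (β i) (α (i + 1)))
/-- The `a`-entries associated to a Verlinde path: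
`a_{i-1} = y(α_i, β_i, α_{i+1})`. -/
def iotaA (α β : ℕ → ℕ) (i : ℕ) : ℕ := yA (α (i + 1)) (β (i + 1)) (α (i + 2))

/-- The `b`-entries associated to a Verlinde path:
`b_i = z(α_i,β_i,α_{i+1}) - (y(α_{i+1},β_{i+1},α_{i+2}) - x(α_i,β_i,α_{i+1}))⁺`
for `i ≥ 1`, with the dummy value `b_0 = 0`. -/
def iotaB (α β : ℕ → ℕ) (i : ℕ) : ℕ :=
  if i = 0 then 0 else
    zA (α i) (β i) (α (i + 1)) -
      (yA (α (i + 1)) (β (i + 1)) (α (i + 2)) - xA (α i) (β i) (α (i + 1)))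

/-- The energy grading `e(α;β) = Σ_{i=1}^{N-1} i (a_i + b_i)`. -/
def eGr (N : ℕ) (α β : ℕ → ℕ) : ℕ :=
  ∑ i ∈ Finset.Icc 1 (N - 1), i * (iotaA α β i + iotaB α β i)

/-- The grading `s₁(α;β) = Σ_{i=1}^{N-1} b_i`. -/
def s1Gr (N : ℕ) (α β : ℕ → ℕ) : ℕ :=
  ∑ i ∈ Finset.Icc 1 (N - 1), iotaB α β i

/-- The grading `s₂(α;β) = a_0 + Σ_{i=1}^{N-1} (a_i + b_i)`. -/
def s2Gr (N : ℕ) (α β : ℕ → ℕ) : ℕ :=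
  iotaA α β 0 + ∑ i ∈ Finset.Icc 1 (N - 1), (iotaA α β i + iotaB α β i)
/-- Reversal of a Verlinde path of length `N`:
`(ᾱ_1,…,ᾱ_N) = (α_N,…,α_1)`. -/
def revA (N : ℕ) (α : ℕ → ℕ) (i : ℕ) : ℕ :=
  if 1 ≤ i ∧ i ≤ N then α (N + 1 - i) else 0

/-- Reversal of the `β`-part: `(β̄_1,…,β̄_{N-1}) = (β_{N-1},…,β_1)`,
with the convention `β̄_N = ᾱ_N = α_1`. -/
def revB (N : ℕ) (α β : ℕ → ℕ) (i : ℕ) : ℕ :=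
  if 1 ≤ i ∧ i ≤ N - 1 then β (N - i) else if i = N then α 1 else 0


def Xp (α β : ℕ → ℕ) (i : ℕ) : ℕ := xA (α i) (β i) (α (i + 1))
def Yp (α β : ℕ → ℕ) (i : ℕ) : ℕ := yA (α i) (β i) (α (i + 1))
def Zp (α β : ℕ → ℕ) (i : ℕ) : ℕ := zA (α i) (β i) (α (i + 1))

lemma verAdmEqs {k a b c : ℕ} (h : IsAdm k a b c) :
    a = xA a b c + yA a b c ∧ b = yA a b c + zA a b c ∧
      c = xA a b c + zA a b c ∧ xA a b c + yA a b c + zA a b c ≤ k := by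
  obtain ⟨x, y, z, hk, ha, hb, hc⟩ := h
  have hx : xA a b c = x := by unfold xA; omega
  have hy : yA a b c = y := by unfold yA; omega
  have hz : zA a b c = z := by unfold zA; omega
  omega

lemma verKey (k : ℕ) (α β : ℕ → ℕ)
    (hadm : ∀ i, 1 ≤ i → IsAdm k (α i) (β i) (α (i + 1))) (i : ℕ) (hi : 1 ≤ i) :
    α i = Xp α β i + Yp α β i ∧ β i = Yp α β i + Zp α β i ∧
      α (i + 1) = Xp α β i + Zp α β i ∧ Xp α β i + Yp α β i + Zp α β i ≤ k :=
  verAdmEqs (hadm i hi)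

lemma verIotaA (α β : ℕ → ℕ) (i : ℕ) : iotaA α β i = Yp α β (i + 1) := rfl

lemma verIotaB (k : ℕ) (α β : ℕ → ℕ)
    (hadm : ∀ i, 1 ≤ i → IsAdm k (α i) (β i) (α (i + 1))) (i : ℕ) (hi : 1 ≤ i) :
    iotaB α β i = min (Zp α β i) (Xp α β (i + 1)) := by
  obtain ⟨k1, k2, k3, k4⟩ := verKey k α β hadm i hi
  obtain ⟨l1, l2, l3, l4⟩ := verKey k α β hadm (i + 1) (by omega)
  unfold iotaB
  rw [if_neg (by omega)]
  have e1 : zA (α i) (β i) (α (i + 1)) = Zp α β i := rfl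
  have e2 : yA (α (i + 1)) (β (i + 1)) (α (i + 2)) = Yp α β (i + 1) := rfl
  have e3 : xA (α i) (β i) (α (i + 1)) = Xp α β i := rfl
  rw [e1, e2, e3]
  omega

lemma verSumReflect (M : ℕ) (f : ℕ → ℕ) :
    ∑ i ∈ Finset.Icc 1 M, f (M + 1 - i) = ∑ i ∈ Finset.Icc 1 M, f i := by
  refine Finset.sum_nbij' (fun i => M + 1 - i) (fun i => M + 1 - i) ?_ ?_ ?_ ?_ ?_ <;>
    intro a ha <;> simp only [Finset.mem_Icc] at * <;> try omega

/-- Reversing a Verlinde path of length `N ≥ 2` yields again a Verlinde path,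
of weight `α_N`, and with `l = α₁`, `l' = α_N`, `i = (α₁+β₁-α₂)/2`,
`i' = (α_N+β_{N-1}-α_{N-1})/2` the gradings satisfy
`e(ᾱ;β̄) + e(α;β) = (N-1)(s₂(α;β)+l-i)`,
`s₁(ᾱ;β̄) + l' - i' = s₁(α;β) + l - i` and
`s₂(ᾱ;β̄) + l' - i' = s₂(α;β) + l - i`. -/
theorem stmt_9 (k N : ℕ) (hk : 1 ≤ k) (hN : 2 ≤ N) (α β : ℕ → ℕ)
    (h : IsVerPath k (α 1) N α β) :
    IsVerPath k (α N) N (revA N α) (revB N α β) ∧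
    ((eGr N (revA N α) (revB N α β) : ℤ) + (eGr N α β : ℤ) =
      ((N : ℤ) - 1) * ((s2Gr N α β : ℤ) + (α 1 : ℤ) -
        (((α 1 : ℤ) + (β 1 : ℤ) - (α 2 : ℤ)) / 2)) ∧
    (s1Gr N (revA N α) (revB N α β) : ℤ) + (α N : ℤ) -
        (((α N : ℤ) + (β (N - 1) : ℤ) - (α (N - 1) : ℤ)) / 2) =
      (s1Gr N α β : ℤ) + (α 1 : ℤ) -
        (((α 1 : ℤ) + (β 1 : ℤ) - (α 2 : ℤ)) / 2) ∧
    (s2Gr N (revA N α) (revB N α β) : ℤ) + (α N : ℤ) -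
        (((α N : ℤ) + (β (N - 1) : ℤ) - (α (N - 1) : ℤ)) / 2) =
      (s2Gr N α β : ℤ) + (α 1 : ℤ) -
        (((α 1 : ℤ) + (β 1 : ℤ) - (α 2 : ℤ)) / 2)) := by
  obtain ⟨hα0, hβ0, -, hβN, hαtop, hβtop, hadm⟩ := h
  obtain ⟨M, rfl⟩ : ∃ M, N = M + 2 := ⟨N - 2, by omega⟩
  -- reversed path value lemmas
  have hrA : ∀ i j, 1 ≤ i → i ≤ M + 2 → j = M + 3 - i → revA (M + 2) α i = α j := by
    intro i j h1 h2 h3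
    unfold revA
    rw [if_pos ⟨h1, h2⟩]
    congr 1
    omega
  have hrA0 : ∀ i, i = 0 ∨ M + 2 < i → revA (M + 2) α i = 0 := by
    intro i hi
    unfold revA
    rw [if_neg (by omega)]
  have hrB : ∀ i j, 1 ≤ i → i ≤ M + 1 → j = M + 2 - i → revB (M + 2) α β i = β j := by
    intro i j h1 h2 h3
    unfold revB
    rw [if_pos ⟨h1, by omega⟩]
    congr 1
    omega
  have hrBN : revB (M + 2) α β (M + 2) = α 1 := by
    unfold revB
    rw [if_neg (by omega), if_pos rfl]
  have hrB0 : ∀ i, i = 0 ∨ M + 2 < i → revB (M + 2) α β i = 0 := by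
    intro i hi
    unfold revB
    rw [if_neg (by omega), if_neg (by omega)]
  -- admissibility of the reversed path
  have radm : ∀ i, 1 ≤ i →
      IsAdm k (revA (M + 2) α i) (revB (M + 2) α β i) (revA (M + 2) α (i + 1)) := by
    intro i hi
    rcases lt_trichotomy i (M + 2) with hlt | heq | hgt
    · have e1 := hrA i ((M + 2 - i) + 1) hi (by omega) (by omega)
      have e2 := hrB i (M + 2 - i) hi (by omega) rfl
      have e3 := hrA (i + 1) (M + 2 - i) (by omega) (by omega) (by omega)
      obtain ⟨k1, k2, k3, k4⟩ := verKey k α β hadm (M + 2 - i) (by omega)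
      refine ⟨Xp α β (M + 2 - i), Zp α β (M + 2 - i), Yp α β (M + 2 - i),
        by omega, ?_, ?_, ?_⟩
      · rw [e1]; omega
      · rw [e2]; omega
      · rw [e3]; omega
    · subst heq
      have e1 := hrA (M + 2) 1 (by omega) (by omega) (by omega)
      have e3 := hrA0 (M + 2 + 1) (by omega)
      obtain ⟨k1, k2, k3, k4⟩ := verKey k α β hadm 1 (by omega)
      refine ⟨0, α 1, 0, by omega, ?_, ?_, ?_⟩
      · rw [e1]; omega
      · rw [hrBN]; omega
      · rw [e3]
    · refine ⟨0, 0, 0, by omega, ?_, ?_, ?_⟩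
      · rw [hrA0 i (by omega)]
      · rw [hrB0 i (by omega)]
      · rw [hrA0 (i + 1) (by omega)]
  -- the reversed path is a Verlinde path
  have hVer : IsVerPath k (α (M + 2)) (M + 2) (revA (M + 2) α) (revB (M + 2) α β) := by
    refine ⟨hrA0 0 (by omega), hrB0 0 (by omega),
      hrA 1 (M + 2) (by omega) (by omega) (by omega), ?_,
      fun i hi => hrA0 i (by omega), fun i hi => hrB0 i (by omega), radm⟩
    rw [hrBN, hrA (M + 2) 1 (by omega) (by omega) (by omega)]
  -- X,Y,Z of the reversed path
  have hrXYZ : ∀ i j, 1 ≤ i → i ≤ M + 1 → j = M + 2 - i →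
      Xp (revA (M + 2) α) (revB (M + 2) α β) i = Xp α β j ∧
      Yp (revA (M + 2) α) (revB (M + 2) α β) i = Zp α β j ∧
      Zp (revA (M + 2) α) (revB (M + 2) α β) i = Yp α β j := by
    intro i j h1 h2 h3
    have e1 := hrA i (j + 1) h1 (by omega) (by omega)
    have e2 := hrB i j h1 (by omega) h3
    have e3 := hrA (i + 1) j (by omega) (by omega) (by omega)
    unfold Xp Yp Zp xA yA zA
    rw [e1, e2, e3]
    omega
  have hrN : Xp (revA (M + 2) α) (revB (M + 2) α β) (M + 2) = 0 ∧
      Yp (revA (M + 2) α) (revB (M + 2) α β) (M + 2) = α 1 ∧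
      Zp (revA (M + 2) α) (revB (M + 2) α β) (M + 2) = 0 := by
    have e1 := hrA (M + 2) 1 (by omega) (by omega) (by omega)
    have e3 := hrA0 (M + 2 + 1) (by omega)
    unfold Xp Yp Zp xA yA zA
    rw [e1, hrBN, e3]
    omega
  -- boundary values of the original path
  have hXYZN : Xp α β (M + 2) = 0 ∧ Zp α β (M + 2) = 0 ∧ Yp α β (M + 2) = α (M + 2) := by
    obtain ⟨k1, k2, k3, k4⟩ := verKey k α β hadm (M + 2) (by omega)
    have h0 : α (M + 2 + 1) = 0 := hαtop _ (by omega)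
    omega
  -- pointwise values of the iota entries
  have habtop : iotaA α β (M + 1) + iotaB α β (M + 1) = α (M + 2) := by
    rw [verIotaA, verIotaB k α β hadm (M + 1) (by omega)]
    have e : Yp α β (M + 1 + 1) = Yp α β (M + 2) := by rw [show M + 1 + 1 = M + 2 by omega]
    have e' : Xp α β (M + 1 + 1) = Xp α β (M + 2) := by rw [show M + 1 + 1 = M + 2 by omega]
    have := hXYZN
    omega
  have hbtop : iotaB α β (M + 1) = 0 := by
    rw [verIotaB k α β hadm (M + 1) (by omega)]
    have e' : Xp α β (M + 1 + 1) = Xp α β (M + 2) := by rw [show M + 1 + 1 = M + 2 by omega]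
    have := hXYZN
    omega
  have habtop' : iotaA (revA (M + 2) α) (revB (M + 2) α β) (M + 1) +
      iotaB (revA (M + 2) α) (revB (M + 2) α β) (M + 1) = α 1 := by
    rw [verIotaA, verIotaB k _ _ radm (M + 1) (by omega)]
    have e : Yp (revA (M + 2) α) (revB (M + 2) α β) (M + 1 + 1) =
        Yp (revA (M + 2) α) (revB (M + 2) α β) (M + 2) := by
      rw [show M + 1 + 1 = M + 2 by omega]
    have e' : Xp (revA (M + 2) α) (revB (M + 2) α β) (M + 1 + 1) =
        Xp (revA (M + 2) α) (revB (M + 2) α β) (M + 2) := by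
      rw [show M + 1 + 1 = M + 2 by omega]
    have := hrN
    omega
  have hbtop' : iotaB (revA (M + 2) α) (revB (M + 2) α β) (M + 1) = 0 := by
    rw [verIotaB k _ _ radm (M + 1) (by omega)]
    have e' : Xp (revA (M + 2) α) (revB (M + 2) α β) (M + 1 + 1) =
        Xp (revA (M + 2) α) (revB (M + 2) α β) (M + 2) := by
      rw [show M + 1 + 1 = M + 2 by omega]
    have := hrN
    omega
  have hab : ∀ i, 1 ≤ i → i ≤ M →
      iotaA α β i + iotaB α β i = Zp α β i + min (Xp α β i) (Yp α β (i + 1)) := by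
    intro i h1 h2
    rw [verIotaA, verIotaB k α β hadm i h1]
    obtain ⟨k1, k2, k3, k4⟩ := verKey k α β hadm i h1
    obtain ⟨l1, l2, l3, l4⟩ := verKey k α β hadm (i + 1) (by omega)
    omega
  have harev : ∀ i, 1 ≤ i → i ≤ M →
      iotaA (revA (M + 2) α) (revB (M + 2) α β) i = Zp α β (M + 1 - i) := by
    intro i h1 h2
    rw [verIotaA]
    exact (hrXYZ (i + 1) (M + 1 - i) (by omega) (by omega) (by omega)).2.1
  have hbrev : ∀ i, 1 ≤ i → i ≤ M →
      iotaB (revA (M + 2) α) (revB (M + 2) α β) i =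
        min (Xp α β (M + 1 - i)) (Yp α β (M + 2 - i)) := by
    intro i h1 h2
    rw [verIotaB k _ _ radm i h1]
    rw [(hrXYZ i (M + 2 - i) h1 (by omega) rfl).2.2]
    rw [(hrXYZ (i + 1) (M + 1 - i) (by omega) (by omega) (by omega)).1]
    exact Nat.min_comm _ _
  -- sum rewrites
  have hsumO : ∑ i ∈ Finset.Icc 1 M, (iotaA α β i + iotaB α β i) =
      ∑ i ∈ Finset.Icc 1 M, (Zp α β i + min (Xp α β i) (Yp α β (i + 1))) :=
    Finset.sum_congr rfl fun i hi => by
      rw [Finset.mem_Icc] at hi; exact hab i hi.1 hi.2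
  have hsumOe : ∑ i ∈ Finset.Icc 1 M, i * (iotaA α β i + iotaB α β i) =
      ∑ i ∈ Finset.Icc 1 M, i * (Zp α β i + min (Xp α β i) (Yp α β (i + 1))) :=
    Finset.sum_congr rfl fun i hi => by
      rw [Finset.mem_Icc] at hi; rw [hab i hi.1 hi.2]
  have hsumOb : ∑ i ∈ Finset.Icc 1 M, iotaB α β i =
      ∑ i ∈ Finset.Icc 1 M, min (Zp α β i) (Xp α β (i + 1)) :=
    Finset.sum_congr rfl fun i hi => by
      rw [Finset.mem_Icc] at hi; exact verIotaB k α β hadm i hi.1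
  have hsumR : ∑ i ∈ Finset.Icc 1 M,
        (iotaA (revA (M + 2) α) (revB (M + 2) α β) i +
          iotaB (revA (M + 2) α) (revB (M + 2) α β) i) =
      ∑ i ∈ Finset.Icc 1 M, (Zp α β i + min (Xp α β i) (Yp α β (i + 1))) := by
    rw [← verSumReflect M (fun j => Zp α β j + min (Xp α β j) (Yp α β (j + 1)))]
    refine Finset.sum_congr rfl fun i hi => ?_
    rw [Finset.mem_Icc] at hi
    rw [harev i hi.1 hi.2, hbrev i hi.1 hi.2]
    rw [show M + 1 - i + 1 = M + 2 - i by omega]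
  have hsumRe : ∑ i ∈ Finset.Icc 1 M,
        i * (iotaA (revA (M + 2) α) (revB (M + 2) α β) i +
          iotaB (revA (M + 2) α) (revB (M + 2) α β) i) =
      ∑ i ∈ Finset.Icc 1 M, (M + 1 - i) * (Zp α β i + min (Xp α β i) (Yp α β (i + 1))) := by
    rw [← verSumReflect M (fun j => (M + 1 - j) * (Zp α β j + min (Xp α β j) (Yp α β (j + 1))))]
    refine Finset.sum_congr rfl fun i hi => ?_
    rw [Finset.mem_Icc] at hi
    rw [harev i hi.1 hi.2, hbrev i hi.1 hi.2]
    rw [show M + 1 - (M + 1 - i) = i by omega, show M + 1 - i + 1 = M + 2 - i by omega]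
  have hsumRb : ∑ i ∈ Finset.Icc 1 M, iotaB (revA (M + 2) α) (revB (M + 2) α β) i =
      ∑ i ∈ Finset.Icc 1 M, min (Xp α β i) (Yp α β (i + 1)) := by
    rw [← verSumReflect M (fun j => min (Xp α β j) (Yp α β (j + 1)))]
    refine Finset.sum_congr rfl fun i hi => ?_
    rw [Finset.mem_Icc] at hi
    rw [hbrev i hi.1 hi.2]
    rw [show M + 1 - i + 1 = M + 2 - i by omega]
  -- grading formulas
  have Se : eGr (M + 2) α β =
      (∑ i ∈ Finset.Icc 1 M, i * (Zp α β i + min (Xp α β i) (Yp α β (i + 1)))) +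
        (M + 1) * α (M + 2) := by
    unfold eGr
    rw [show M + 2 - 1 = M + 1 by omega, Finset.sum_Icc_succ_top (by omega : 1 ≤ M + 1),
      hsumOe, habtop]
  have Ser : eGr (M + 2) (revA (M + 2) α) (revB (M + 2) α β) =
      (∑ i ∈ Finset.Icc 1 M, (M + 1 - i) * (Zp α β i + min (Xp α β i) (Yp α β (i + 1)))) +
        (M + 1) * α 1 := by
    unfold eGr
    rw [show M + 2 - 1 = M + 1 by omega, Finset.sum_Icc_succ_top (by omega : 1 ≤ M + 1),
      hsumRe, habtop']
  have Hs2 : s2Gr (M + 2) α β = iotaA α β 0 +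
      ((∑ i ∈ Finset.Icc 1 M, (Zp α β i + min (Xp α β i) (Yp α β (i + 1)))) + α (M + 2)) := by
    unfold s2Gr
    rw [show M + 2 - 1 = M + 1 by omega, Finset.sum_Icc_succ_top (by omega : 1 ≤ M + 1),
      hsumO, habtop]
  have Hs2r : s2Gr (M + 2) (revA (M + 2) α) (revB (M + 2) α β) =
      iotaA (revA (M + 2) α) (revB (M + 2) α β) 0 +
      ((∑ i ∈ Finset.Icc 1 M, (Zp α β i + min (Xp α β i) (Yp α β (i + 1)))) + α 1) := by
    unfold s2Gr
    rw [show M + 2 - 1 = M + 1 by omega, Finset.sum_Icc_succ_top (by omega : 1 ≤ M + 1),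
      hsumR, habtop']
  have Hs1 : s1Gr (M + 2) α β =
      ∑ i ∈ Finset.Icc 1 M, min (Zp α β i) (Xp α β (i + 1)) := by
    unfold s1Gr
    rw [show M + 2 - 1 = M + 1 by omega, Finset.sum_Icc_succ_top (by omega : 1 ≤ M + 1),
      hsumOb, hbtop, Nat.add_zero]
  have Hs1r : s1Gr (M + 2) (revA (M + 2) α) (revB (M + 2) α β) =
      ∑ i ∈ Finset.Icc 1 M, min (Xp α β i) (Yp α β (i + 1)) := by
    unfold s1Gr
    rw [show M + 2 - 1 = M + 1 by omega, Finset.sum_Icc_succ_top (by omega : 1 ≤ M + 1),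
      hsumRb, hbtop', Nat.add_zero]
  -- combination identities
  have Hsum : (∑ i ∈ Finset.Icc 1 M, i * (Zp α β i + min (Xp α β i) (Yp α β (i + 1)))) +
      (∑ i ∈ Finset.Icc 1 M, (M + 1 - i) * (Zp α β i + min (Xp α β i) (Yp α β (i + 1)))) =
      (M + 1) * ∑ i ∈ Finset.Icc 1 M, (Zp α β i + min (Xp α β i) (Yp α β (i + 1))) := by
    rw [Finset.mul_sum, ← Finset.sum_add_distrib]
    refine Finset.sum_congr rfl fun i hi => ?_
    rw [Finset.mem_Icc] at hi
    rw [← Nat.add_mul, show i + (M + 1 - i) = M + 1 by omega]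
  have Hmin : (∑ i ∈ Finset.Icc 1 M, min (Zp α β i) (Xp α β (i + 1))) +
      (∑ i ∈ Finset.Icc 1 M, Xp α β i) =
      (∑ i ∈ Finset.Icc 1 M, min (Xp α β i) (Yp α β (i + 1))) +
      (∑ i ∈ Finset.Icc 1 M, Xp α β (i + 1)) := by
    rw [← Finset.sum_add_distrib, ← Finset.sum_add_distrib]
    refine Finset.sum_congr rfl fun i hi => ?_
    rw [Finset.mem_Icc] at hi
    obtain ⟨k1, k2, k3, k4⟩ := verKey k α β hadm i (by omega)
    obtain ⟨l1, l2, l3, l4⟩ := verKey k α β hadm (i + 1) (by omega)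
    omega
  have Htele : ∀ m : ℕ, (∑ i ∈ Finset.Icc 1 m, Xp α β (i + 1)) + Xp α β 1 =
      (∑ i ∈ Finset.Icc 1 m, Xp α β i) + Xp α β (m + 1) := by
    intro m
    induction m with
    | zero => simp
    | succ n ih =>
      rw [Finset.sum_Icc_succ_top (by omega : 1 ≤ n + 1),
        Finset.sum_Icc_succ_top (by omega : 1 ≤ n + 1)]
      omega
  -- key facts and bridges for the final computations
  obtain ⟨K1a, K1b, K1c, K1d⟩ := verKey k α β hadm 1 (by omega)
  obtain ⟨KMa, KMb, KMc, KMd⟩ := verKey k α β hadm (M + 1) (by omega)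
  have b0 : iotaA α β 0 = Yp α β 1 := verIotaA α β 0
  have b0r : iotaA (revA (M + 2) α) (revB (M + 2) α β) 0 = Zp α β (M + 1) := by
    rw [verIotaA]
    exact (hrXYZ 1 (M + 1) (by omega) (by omega) (by omega)).2.1
  have b1 : α (1 + 1) = α 2 := rfl
  have b2 : α (M + 1 + 1) = α (M + 2) := by rw [show M + 1 + 1 = M + 2 by omega]
  have b3 : β (M + 2 - 1) = β (M + 1) := by rw [show M + 2 - 1 = M + 1 by omega]
  have b4 : α (M + 2 - 1) = α (M + 1) := by rw [show M + 2 - 1 = M + 1 by omega]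
  have hdiv1 : ((α 1 : ℤ) + (β 1 : ℤ) - (α 2 : ℤ)) / 2 = (Yp α β 1 : ℤ) := by omega
  have hdiv2 : ((α (M + 2) : ℤ) + (β (M + 2 - 1) : ℤ) - (α (M + 2 - 1) : ℤ)) / 2 =
      (Zp α β (M + 1) : ℤ) := by omega
  refine ⟨hVer, ?_, ?_, ?_⟩
  · rw [Se, Ser, Hs2, hdiv1, b0]
    have HsumZ := congrArg (Nat.cast : ℕ → ℤ) Hsum
    push_cast at HsumZ ⊢
    linear_combination HsumZ
  · rw [Hs1, Hs1r, hdiv1, hdiv2]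
    have T := Htele M
    omega
  · rw [Hs2, Hs2r, hdiv1, hdiv2, b0, b0r]
    omega
end

section
/- For N ≥ 2, 0 ≤ l ≤ k and all 0 ≤ j ≤ i ≤ k, the partial characters satisfy the recursion χ^{N+1}_{k,l}[*;i,j](q,z₁,z₂) = Σ_{0 ≤ j' ≤ i' ≤ k} R^{(N)}_k((i,j),(i',j')) · χ^N_{k,l}[*;i',j'](q,z₁,z₂), where R^{(N)}_k((i,j),(i',j')) = q^{Ni − (N−1)·max(i−j−j',0)} · z₁^{j' − max(j+j'−i,0)} · z₂^{i − max(i−j−j',0)} if (i', 2j−i+i', i) is an admissible Verlinde triple of level k, and R^{(N)}_k((i,j),(i',j')) = 0 otherwise; this is an identity of Laurent polynomials in q, z₁, z₂. -/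
open Classical in
/-- The partial character `χ^N_{k,l}[*;i,j](q,z₁,z₂)`, an element of the ring
of Laurent polynomials in `q = X(1,0,0)`, `z₁ = X(0,1,0)`, `z₂ = X(0,0,1)`,
realized as the group algebra `ℤ[ℤ³]`: the sum of `q^e z₁^{s₁} z₂^{s₂}` over
all Verlinde paths of length `N`, level `k`, weight `l` with `α_N = i` and
`α_N + β_{N-1} - α_{N-1} = 2j`. -/
noncomputable def chiEnd (k l N i j : ℕ) : AddMonoidAlgebra ℤ (ℤ × ℤ × ℤ) :=
  ∑ᶠ (p : (ℕ → ℕ) × (ℕ → ℕ))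
      (_ : IsVerPath k l N p.1 p.2 ∧ p.1 N = i ∧
           p.1 N + p.2 (N - 1) = p.1 (N - 1) + 2 * j),
    AddMonoidAlgebra.single
      ((eGr N p.1 p.2 : ℤ), (s1Gr N p.1 p.2 : ℤ), (s2Gr N p.1 p.2 : ℤ)) 1

open Classical in
/-- The matrix entry `R^{(N)}_k((i,j),(i',j'))`. -/
noncomputable def Rmat (k N i j i' j' : ℕ) : AddMonoidAlgebra ℤ (ℤ × ℤ × ℤ) :=
  if ∃ β : ℕ, (β : ℤ) = 2 * j - i + i' ∧ IsAdm k i' β i then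
    AddMonoidAlgebra.single
      (((N * i - (N - 1) * (i - j - j') : ℕ) : ℤ),
       ((j' - (j + j' - i) : ℕ) : ℤ),
       ((i - (i - j - j') : ℕ) : ℤ)) 1
  else 0

-- AUX

def PathSet (k l N i j : ℕ) : Set ((ℕ → ℕ) × (ℕ → ℕ)) :=
  {p | IsVerPath k l N p.1 p.2 ∧ p.1 N = i ∧
       p.1 N + p.2 (N - 1) = p.1 (N - 1) + 2 * j}

def wt (N : ℕ) (p : (ℕ → ℕ) × (ℕ → ℕ)) : ℤ × ℤ × ℤ :=
  ((eGr N p.1 p.2 : ℤ), (s1Gr N p.1 p.2 : ℤ), (s2Gr N p.1 p.2 : ℤ))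

lemma verPath_bound {k l N : ℕ} {α β : ℕ → ℕ} (h : IsVerPath k l N α β) :
    ∀ m, α m ≤ k ∧ β m ≤ k := by
  obtain ⟨h0, h0', -, -, -, -, hadm⟩ := h
  intro m
  match m with
  | 0 => omega
  | (m+1) =>
    obtain ⟨x, y, z, hs, h1, h2, -⟩ := hadm (m+1) (by omega)
    omega

def extF (k N : ℕ) (f : Fin (N + 1) → Fin (k + 1)) : ℕ → ℕ :=
  fun m => if h : m ≤ N then (f ⟨m, Nat.lt_succ_of_le h⟩ : ℕ) else 0

lemma pathSet_finite (k l N i j : ℕ) : (PathSet k l N i j).Finite := by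
  apply Set.Finite.subset ((Set.finite_range (extF k N)).prod (Set.finite_range (extF k N)))
  rintro ⟨α, β⟩ ⟨hvp, -, -⟩
  have hb := verPath_bound hvp
  obtain ⟨-, -, -, -, hα0, hβ0, -⟩ := hvp
  constructor
  · refine ⟨fun v => ⟨α v, Nat.lt_succ_of_le (hb v).1⟩, funext fun m => ?_⟩
    simp only [extF]
    split
    · rfl
    · exact (hα0 m (by omega)).symm
  · refine ⟨fun v => ⟨β v, Nat.lt_succ_of_le (hb v).2⟩, funext fun m => ?_⟩
    simp only [extF]
    split
    · rfl
    · exact (hβ0 m (by omega)).symm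

lemma chiEnd_eq (k l N i j : ℕ) :
    chiEnd k l N i j =
      ∑ p ∈ (pathSet_finite k l N i j).toFinset, AddMonoidAlgebra.single (wt N p) 1 := by
  exact finsum_mem_eq_finite_toFinset_sum _ (pathSet_finite k l N i j)

def extP (N i B : ℕ) (p : (ℕ → ℕ) × (ℕ → ℕ)) : (ℕ → ℕ) × (ℕ → ℕ) :=
  (fun m => if m = N + 1 then i else p.1 m,
   fun m => if m = N then B else if m = N + 1 then i else p.2 m)

def truncP (N : ℕ) (p : (ℕ → ℕ) × (ℕ → ℕ)) : (ℕ → ℕ) × (ℕ → ℕ) :=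
  (fun m => if m = N + 1 then 0 else p.1 m,
   fun m => if m = N then p.1 N else if m = N + 1 then 0 else p.2 m)

lemma extP_fst {N i B : ℕ} {p : (ℕ → ℕ) × (ℕ → ℕ)} (m : ℕ) (hm : m ≠ N + 1) :
    (extP N i B p).1 m = p.1 m := if_neg hm

lemma extP_fst_top {N i B : ℕ} {p : (ℕ → ℕ) × (ℕ → ℕ)} :
    (extP N i B p).1 (N + 1) = i := if_pos rfl

lemma extP_snd {N i B : ℕ} {p : (ℕ → ℕ) × (ℕ → ℕ)} (m : ℕ) (h1 : m ≠ N) (h2 : m ≠ N + 1) :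
    (extP N i B p).2 m = p.2 m := by
  show (if m = N then B else if m = N + 1 then i else p.2 m) = p.2 m
  rw [if_neg h1, if_neg h2]

lemma extP_snd_N {N i B : ℕ} {p : (ℕ → ℕ) × (ℕ → ℕ)} :
    (extP N i B p).2 N = B := if_pos rfl

lemma extP_snd_N1 {N i B : ℕ} {p : (ℕ → ℕ) × (ℕ → ℕ)} (h : N + 1 ≠ N) :
    (extP N i B p).2 (N + 1) = i := by
  show (if N + 1 = N then B else if N + 1 = N + 1 then i else p.2 (N + 1)) = i
  rw [if_neg h, if_pos rfl]

lemma arith_e (S A1 A2 A3 A4 : ℕ) (h1 : A3 ≤ A2) (h2 : A4 = A1 + A3) :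
    S + A1 + A2 = (A2 - A3) + (S + A4) := by omega

lemma adm_yA {a b c x y z : ℕ} (h1 : a = x + y) (h2 : b = y + z) (h3 : c = x + z) :
    yA a b c = y := by unfold yA; omega

lemma val_yA0 (i : ℕ) : yA i i 0 = i := by unfold yA; omega

lemma valB1 {A Bm I B i j j' x y xt yt : ℕ} (h1 : A = x + y) (h2 : Bm = y + j')
    (h3 : I = x + j') (t1 : I = xt + yt) (t2 : B = yt + j) (t3 : i = xt + j) :
    zA A Bm I - (yA I B i - xA A Bm I) = j' - (j + j' - i) := by
  unfold xA yA zA; omega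

lemma valB2 {I B i xt yt j : ℕ} (t1 : I = xt + yt) (t2 : B = yt + j) (t3 : i = xt + j) :
    zA I B i - (yA i i 0 - xA I B i) = 0 := by unfold xA yA zA; omega

lemma valpB1 {A Bm I x y j' : ℕ} (h1 : A = x + y) (h2 : Bm = y + j') (h3 : I = x + j') :
    zA A Bm I - (yA I I 0 - xA A Bm I) = 0 := by unfold xA yA zA; omega

lemma key_split {i i' j j' xt yt : ℕ} (t1 : i' = xt + yt) (t3 : i = xt + j) :
    i' = yt + (j' - (j + j' - i)) + (i - j - j') := by omega

lemma arith_s1 (S b : ℕ) : S + b + 0 = b + (S + 0) := by omega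

lemma arith_s2 {a S i i' j j' xt yt : ℕ} (t1 : i' = xt + yt) (t3 : i = xt + j) :
    a + (S + (yt + (j' - (j + j' - i))) + (i + 0)) =
      (i - (i - j - j')) + (a + (S + (i' + 0))) := by omega

lemma cast_arith {B i i' j : ℕ} (hB : (B : ℤ) = 2 * j - i + i') : i + B = i' + 2 * j := by
  omega

set_option maxHeartbeats 1000000 in
lemma ext_path (k l M i j i' j' B : ℕ) (hik : i ≤ k)
    (hB : (B : ℤ) = 2 * j - i + i') (hadm : IsAdm k i' B i)
    (p : (ℕ → ℕ) × (ℕ → ℕ)) (hp : p ∈ PathSet k l (M + 2) i' j') :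
    extP (M + 2) i B p ∈ PathSet k l (M + 3) i j ∧
    (extP (M + 2) i B p).1 (M + 2) = i' ∧
    (extP (M + 2) i B p).1 (M + 2) + (extP (M + 2) i B p).2 (M + 1) =
      (extP (M + 2) i B p).1 (M + 1) + 2 * j' ∧
    truncP (M + 2) (extP (M + 2) i B p) = p := by
  obtain ⟨hvp, hαN, heq⟩ := hp
  have h21 : M + 2 - 1 = M + 1 := by omega
  rw [h21] at heq
  obtain ⟨hα0, hβ0, hα1, hβtop, hαv, hβv, hadmP⟩ := hvp
  have hiB : i + B = i' + 2 * j := cast_arith hB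
  clear hB
  have e23 : M + 2 + 1 = M + 3 := by omega
  have e34 : M + 3 + 1 = M + 4 := by omega
  have hEα : ∀ m, m ≠ M + 3 → (extP (M + 2) i B p).1 m = p.1 m := fun m hm =>
    extP_fst m (by omega)
  have hEαtop : (extP (M + 2) i B p).1 (M + 3) = i := by rw [← e23]; exact extP_fst_top
  have hEβ : ∀ m, m ≠ M + 2 → m ≠ M + 3 → (extP (M + 2) i B p).2 m = p.2 m := fun m h1 h2 =>
    extP_snd m h1 (by omega)
  have hEβN : (extP (M + 2) i B p).2 (M + 2) = B := extP_snd_N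
  have hEβN1 : (extP (M + 2) i B p).2 (M + 3) = i := by
    rw [← e23]; exact extP_snd_N1 (by omega)
  refine ⟨⟨⟨?_, ?_, ?_, ?_, ?_, ?_, ?_⟩, ?_, ?_⟩, ?_, ?_, ?_⟩
  · rw [hEα 0 (by omega)]; exact hα0
  · rw [hEβ 0 (by omega) (by omega)]; exact hβ0
  · rw [hEα 1 (by omega)]; exact hα1
  · rw [hEβN1, hEαtop]
  · intro m hm; rw [hEα m (by omega)]; exact hαv m (by omega)
  · intro m hm; rw [hEβ m (by omega) (by omega)]; exact hβv m (by omega)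
  · intro m hm
    rcases Nat.lt_or_ge m (M + 2) with h | h
    · rw [hEα m (by omega), hEβ m (by omega) (by omega), hEα (m + 1) (by omega)]
      exact hadmP m hm
    rcases Nat.eq_or_lt_of_le h with h2 | h2
    · have hm2 : m = M + 2 := h2.symm
      subst hm2
      rw [hEα (M + 2) (by omega), hEβN, e23, hEαtop, hαN]
      exact hadm
    rcases Nat.eq_or_lt_of_le h2 with h3 | h3
    · have hm3 : m = M + 3 := by omega
      subst hm3
      rw [hEαtop, hEβN1, e34, hEα (M + 4) (by omega)]
      rw [hαv (M + 4) (by omega)]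
      exact ⟨0, i, 0, by omega, by omega, by omega, by omega⟩
    · rw [hEα m (by omega), hEβ m (by omega) (by omega), hEα (m + 1) (by omega)]
      rw [hαv m (by omega), hβv m (by omega), hαv (m + 1) (by omega)]
      exact ⟨0, 0, 0, by omega, by omega, by omega, by omega⟩
  · exact hEαtop
  · rw [show M + 3 - 1 = M + 2 from by omega, hEαtop, hEβN, hEα (M + 2) (by omega), hαN]
    exact hiB
  · rw [hEα (M + 2) (by omega)]; exact hαN
  · rw [hEα (M + 2) (by omega), hEβ (M + 1) (by omega) (by omega), hEα (M + 1) (by omega)]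
    exact heq
  · rw [Prod.ext_iff]
    constructor
    · funext m
      show (if m = M + 2 + 1 then 0 else (extP (M + 2) i B p).1 m) = p.1 m
      by_cases hm : m = M + 3
      · subst hm; rw [if_pos (by omega)]; exact (hαv _ (by omega)).symm
      · rw [if_neg (by omega)]; exact hEα m hm
    · funext m
      show (if m = M + 2 then (extP (M + 2) i B p).1 (M + 2)
          else if m = M + 2 + 1 then 0 else (extP (M + 2) i B p).2 m) = p.2 m
      by_cases hm : m = M + 2
      · subst hm; rw [if_pos rfl, hEα (M + 2) (by omega)]; exact hβtop.symm
      · by_cases hm2 : m = M + 3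
        · subst hm2; rw [if_neg (by omega), if_pos (by omega)]
          exact (hβv _ (by omega)).symm
        · rw [if_neg hm, if_neg (by omega)]; exact hEβ m hm hm2

set_option maxHeartbeats 1000000 in
lemma ext_wt (k l M i j i' j' B : ℕ) (hji : j ≤ i)
    (hB : (B : ℤ) = 2 * j - i + i') (hadm : IsAdm k i' B i)
    (p : (ℕ → ℕ) × (ℕ → ℕ)) (hp : p ∈ PathSet k l (M + 2) i' j') :
    wt (M + 3) (extP (M + 2) i B p) =
      ((((M + 2) * i - (M + 1) * (i - j - j') : ℕ) : ℤ),
       ((j' - (j + j' - i) : ℕ) : ℤ), ((i - (i - j - j') : ℕ) : ℤ)) + wt (M + 2) p := by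
  obtain ⟨hvp, hαN, heq⟩ := hp
  have h21 : M + 2 - 1 = M + 1 := by omega
  rw [h21] at heq
  obtain ⟨hα0, hβ0, hα1, hβtop, hαv, hβv, hadmP⟩ := hvp
  have e12 : M + 1 + 1 = M + 2 := by omega
  have e23 : M + 2 + 1 = M + 3 := by omega
  have e13 : M + 1 + 2 = M + 3 := by omega
  have e24 : M + 2 + 2 = M + 4 := by omega
  have hEα : ∀ m, m ≠ M + 3 → (extP (M + 2) i B p).1 m = p.1 m := fun m hm =>
    extP_fst m (by omega)
  have hEαtop : (extP (M + 2) i B p).1 (M + 3) = i := by rw [← e23]; exact extP_fst_top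
  have hEβ : ∀ m, m ≠ M + 2 → m ≠ M + 3 → (extP (M + 2) i B p).2 m = p.2 m := fun m h1 h2 =>
    extP_snd m h1 (by omega)
  have hEβN : (extP (M + 2) i B p).2 (M + 2) = B := extP_snd_N
  have hEβN1 : (extP (M + 2) i B p).2 (M + 3) = i := by
    rw [← e23]; exact extP_snd_N1 (by omega)
  obtain ⟨x, y, z, hxyzk, hx1, hx2, hx3⟩ := hadmP (M + 1) (by omega)
  rw [e12] at hx3
  obtain ⟨xt, yt, zt, htk, ht1, ht2, ht3⟩ := id hadm
  have hzj' : z = j' := by omega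
  have hztj : zt = j := by omega
  have hx2' : p.2 (M + 1) = y + j' := by rw [hx2, hzj']
  have hx3' : i' = x + j' := by rw [← hαN, hx3, hzj']
  have ht2' : B = yt + j := by rw [ht2, hztj]
  have ht3' : i = xt + j := by rw [ht3, hztj]
  have hβN : p.2 (M + 2) = i' := hβtop.trans hαN
  set q := extP (M + 2) i B p with hq
  clear_value q
  clear hq hadm hadmP hB heq hx2 hx3 ht2 ht3 hzj' hztj hα0 hβ0 hα1
  have hcommA : ∀ m, m ≤ M → iotaA q.1 q.2 m = iotaA p.1 p.2 m := by
    intro m hm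
    unfold iotaA
    rw [hEα (m + 1) (by omega), hEβ (m + 1) (by omega) (by omega), hEα (m + 2) (by omega)]
  have hcommB : ∀ m, m ≤ M → iotaB q.1 q.2 m = iotaB p.1 p.2 m := by
    intro m hm
    unfold iotaB
    by_cases h0 : m = 0
    · simp [h0]
    · rw [if_neg h0, if_neg h0, hEα m (by omega), hEβ m (by omega) (by omega),
        hEα (m + 1) (by omega), hEβ (m + 1) (by omega) (by omega), hEα (m + 2) (by omega)]
  have vA1 : iotaA q.1 q.2 (M + 1) = yt := by
    unfold iotaA
    rw [e12, e13, hEα (M + 2) (by omega), hEβN, hEαtop, hαN]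
    exact adm_yA ht1 ht2' ht3'
  have vB1 : iotaB q.1 q.2 (M + 1) = j' - (j + j' - i) := by
    unfold iotaB
    rw [if_neg (show ¬(M + 1 = 0) from by omega), e12, e13, hEα (M + 1) (by omega),
      hEβ (M + 1) (by omega) (by omega), hEα (M + 2) (by omega), hEβN, hEαtop, hαN]
    exact valB1 hx1 hx2' hx3' ht1 ht2' ht3'
  have vA2 : iotaA q.1 q.2 (M + 2) = i := by
    unfold iotaA
    rw [e23, e24, hEβN1, hEαtop, hEα (M + 4) (by omega), hαv (M + 4) (by omega)]
    exact val_yA0 i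
  have vB2 : iotaB q.1 q.2 (M + 2) = 0 := by
    unfold iotaB
    rw [if_neg (show ¬(M + 2 = 0) from by omega), e23, e24, hEα (M + 2) (by omega), hαN, hEβN,
      hEβN1, hEαtop, hEα (M + 4) (by omega), hαv (M + 4) (by omega)]
    exact valB2 ht1 ht2' ht3'
  have pA1 : iotaA p.1 p.2 (M + 1) = i' := by
    unfold iotaA
    rw [e12, e13, hαN, hαv (M + 3) (by omega), hβN]
    exact val_yA0 i'
  have pB1 : iotaB p.1 p.2 (M + 1) = 0 := by
    unfold iotaB
    rw [if_neg (show ¬(M + 1 = 0) from by omega), e12, e13, hαN, hαv (M + 3) (by omega), hβN]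
    exact valpB1 hx1 hx2' hx3'
  have h32 : M + 3 - 1 = M + 2 := by omega
  have hsplitE : ∀ g : ℕ → ℕ, ∑ m ∈ Finset.Icc 1 (M + 2), g m =
      (∑ m ∈ Finset.Icc 1 M, g m) + g (M + 1) + g (M + 2) := by
    intro g
    rw [Finset.sum_Icc_succ_top (by omega), Finset.sum_Icc_succ_top (by omega)]
  have hsplit1 : ∀ g : ℕ → ℕ, ∑ m ∈ Finset.Icc 1 (M + 1), g m =
      (∑ m ∈ Finset.Icc 1 M, g m) + g (M + 1) := by
    intro g
    rw [Finset.sum_Icc_succ_top (by omega)]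
  have hCSe : ∑ m ∈ Finset.Icc 1 M, m * (iotaA q.1 q.2 m + iotaB q.1 q.2 m)
      = ∑ m ∈ Finset.Icc 1 M, m * (iotaA p.1 p.2 m + iotaB p.1 p.2 m) :=
    Finset.sum_congr rfl (fun m hm => by
      rw [hcommA m (Finset.mem_Icc.mp hm).2, hcommB m (Finset.mem_Icc.mp hm).2])
  have hCSb : ∑ m ∈ Finset.Icc 1 M, iotaB q.1 q.2 m
      = ∑ m ∈ Finset.Icc 1 M, iotaB p.1 p.2 m :=
    Finset.sum_congr rfl (fun m hm => hcommB m (Finset.mem_Icc.mp hm).2)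
  have hCSab : ∑ m ∈ Finset.Icc 1 M, (iotaA q.1 q.2 m + iotaB q.1 q.2 m)
      = ∑ m ∈ Finset.Icc 1 M, (iotaA p.1 p.2 m + iotaB p.1 p.2 m) :=
    Finset.sum_congr rfl (fun m hm => by
      rw [hcommA m (Finset.mem_Icc.mp hm).2, hcommB m (Finset.mem_Icc.mp hm).2])
  have hE : eGr (M + 3) q.1 q.2 = ((M + 2) * i - (M + 1) * (i - j - j')) + eGr (M + 2) p.1 p.2 := by
    unfold eGr
    rw [h32, h21, hsplitE, hsplit1, hCSe]
    rw [vA1, vB1, vA2, vB2, pA1, pB1, Nat.add_zero, Nat.add_zero]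
    have hd1 : (M + 1) * (i - j - j') ≤ (M + 2) * i :=
      Nat.mul_le_mul (by omega) (le_trans (Nat.sub_le _ _) (Nat.sub_le _ _))
    have hd2 : (M + 1) * i' = (M + 1) * (yt + (j' - (j + j' - i))) + (M + 1) * (i - j - j') := by
      rw [show i' = yt + (j' - (j + j' - i)) + (i - j - j') from key_split ht1 ht3', mul_add]
    exact arith_e _ _ _ _ _ hd1 hd2
  have hS1 : s1Gr (M + 3) q.1 q.2 = (j' - (j + j' - i)) + s1Gr (M + 2) p.1 p.2 := by
    unfold s1Gr
    rw [h32, h21, hsplitE, hsplit1, hCSb, vB1, vB2, pB1]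
    exact arith_s1 _ _
  have hS2 : s2Gr (M + 3) q.1 q.2 = (i - (i - j - j')) + s2Gr (M + 2) p.1 p.2 := by
    unfold s2Gr
    rw [h32, h21, hsplitE, hsplit1, hCSab, hcommA 0 (by omega), vA1, vB1, vA2, vB2, pA1, pB1]
    exact arith_s2 ht1 ht3'
  unfold wt
  rw [Prod.mk_add_mk, Prod.mk_add_mk, Prod.mk.injEq, Prod.mk.injEq]
  refine ⟨?_, ?_, ?_⟩
  · rw [hE]; push_cast; ring
  · rw [hS1]; push_cast; ring
  · rw [hS2]; push_cast; ring

set_option maxHeartbeats 1000000 in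
lemma trunc_mem (k l M i j i' j' : ℕ) (pt : (ℕ → ℕ) × (ℕ → ℕ))
    (hpt : pt ∈ PathSet k l (M + 3) i j)
    (hQ1 : pt.1 (M + 2) = i') (hQ2 : pt.1 (M + 2) + pt.2 (M + 1) = pt.1 (M + 1) + 2 * j') :
    truncP (M + 2) pt ∈ PathSet k l (M + 2) i' j' ∧
      ((pt.2 (M + 2) : ℤ) = 2 * (j : ℤ) - i + i') ∧ IsAdm k i' (pt.2 (M + 2)) i ∧
      extP (M + 2) i (pt.2 (M + 2)) (truncP (M + 2) pt) = pt ∧ i' ≤ k := by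
  obtain ⟨hvp, hend1, hend2⟩ := hpt
  have h31 : M + 3 - 1 = M + 2 := by omega
  rw [h31, hend1] at hend2
  obtain ⟨hα0, hβ0, hα1, hβtop, hαv, hβv, hadmP⟩ := hvp
  have e12 : M + 1 + 1 = M + 2 := by omega
  have e23 : M + 2 + 1 = M + 3 := by omega
  have e34 : M + 3 + 1 = M + 4 := by omega
  have hTα : ∀ m, m ≠ M + 3 → (truncP (M + 2) pt).1 m = pt.1 m := by
    intro m hm
    show (if m = M + 2 + 1 then 0 else pt.1 m) = pt.1 m
    rw [if_neg (by omega)]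
  have hTαtop : (truncP (M + 2) pt).1 (M + 3) = 0 := by
    show (if M + 3 = M + 2 + 1 then 0 else pt.1 (M + 3)) = 0
    rw [if_pos (by omega)]
  have hTβ : ∀ m, m ≠ M + 2 → m ≠ M + 3 → (truncP (M + 2) pt).2 m = pt.2 m := by
    intro m h1 h2
    show (if m = M + 2 then pt.1 (M + 2) else if m = M + 2 + 1 then 0 else pt.2 m) = pt.2 m
    rw [if_neg h1, if_neg (by omega)]
  have hTβN : (truncP (M + 2) pt).2 (M + 2) = pt.1 (M + 2) := by
    show (if M + 2 = M + 2 then pt.1 (M + 2) else _) = pt.1 (M + 2)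
    rw [if_pos rfl]
  have hTβN1 : (truncP (M + 2) pt).2 (M + 3) = 0 := by
    show (if M + 3 = M + 2 then pt.1 (M + 2) else if M + 3 = M + 2 + 1 then 0 else pt.2 (M + 3)) = 0
    rw [if_neg (by omega), if_pos (by omega)]
  have hadm2 := hadmP (M + 2) (by omega)
  rw [e23, hend1, hQ1] at hadm2
  have hik' : i' ≤ k := by
    obtain ⟨a, b, c, hs, h1, h2, h3⟩ := hadm2; omega
  have hcast : (pt.2 (M + 2) : ℤ) = 2 * (j : ℤ) - i + i' := by omega
  refine ⟨⟨⟨?_, ?_, ?_, ?_, ?_, ?_, ?_⟩, ?_, ?_⟩, hcast, hadm2, ?_, hik'⟩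
  · rw [hTα 0 (by omega)]; exact hα0
  · rw [hTβ 0 (by omega) (by omega)]; exact hβ0
  · rw [hTα 1 (by omega)]; exact hα1
  · rw [hTβN, hTα (M + 2) (by omega)]
  · intro m hm
    by_cases h : m = M + 3
    · subst h; exact hTαtop
    · rw [hTα m h]; exact hαv m (by omega)
  · intro m hm
    by_cases h : m = M + 3
    · subst h; exact hTβN1
    · rw [hTβ m (by omega) h]; exact hβv m (by omega)
  · intro m hm
    rcases Nat.lt_or_ge m (M + 2) with h | h
    · rw [hTα m (by omega), hTβ m (by omega) (by omega), hTα (m + 1) (by omega)]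
      exact hadmP m hm
    rcases Nat.eq_or_lt_of_le h with h2 | h2
    · have hm2 : m = M + 2 := h2.symm
      subst hm2
      rw [hTα (M + 2) (by omega), hTβN, e23, hTαtop, hQ1]
      exact ⟨0, i', 0, by omega, by omega, by omega, by omega⟩
    rcases Nat.eq_or_lt_of_le h2 with h3 | h3
    · have hm3 : m = M + 3 := by omega
      subst hm3
      rw [hTαtop, hTβN1, e34, hTα (M + 4) (by omega), hαv (M + 4) (by omega)]
      exact ⟨0, 0, 0, by omega, by omega, by omega, by omega⟩
    · rw [hTα m (by omega), hTβ m (by omega) (by omega), hTα (m + 1) (by omega)]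
      rw [hαv m (by omega), hβv m (by omega), hαv (m + 1) (by omega)]
      exact ⟨0, 0, 0, by omega, by omega, by omega, by omega⟩
  · rw [hTα (M + 2) (by omega)]; exact hQ1
  · rw [show M + 2 - 1 = M + 1 from by omega, hTα (M + 2) (by omega),
      hTβ (M + 1) (by omega) (by omega), hTα (M + 1) (by omega)]
    exact hQ2
  · -- ext (trunc pt) = pt
    rw [Prod.ext_iff]
    constructor
    · funext m
      show (if m = M + 2 + 1 then i else (truncP (M + 2) pt).1 m) = pt.1 m
      by_cases hm : m = M + 3
      · subst hm; rw [if_pos (by omega)]; exact hend1.symm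
      · rw [if_neg (by omega)]; exact hTα m hm
    · funext m
      show (if m = M + 2 then pt.2 (M + 2)
          else if m = M + 2 + 1 then i else (truncP (M + 2) pt).2 m) = pt.2 m
      by_cases hm : m = M + 2
      · subst hm; rw [if_pos rfl]
      · by_cases hm2 : m = M + 3
        · subst hm2; rw [if_neg (by omega), if_pos (by omega), hβtop, hend1]
        · rw [if_neg hm, if_neg (by omega)]; exact hTβ m hm hm2

lemma fiber_data (k l M i j : ℕ) (pt : (ℕ → ℕ) × (ℕ → ℕ))
    (hpt : pt ∈ PathSet k l (M + 3) i j) :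
    pt.1 (M + 2) ≤ k ∧ ∃ j'', j'' ≤ pt.1 (M + 2) ∧
      pt.1 (M + 2) + pt.2 (M + 1) = pt.1 (M + 1) + 2 * j'' := by
  obtain ⟨hvp, -, -⟩ := hpt
  obtain ⟨-, -, -, -, -, -, hadmP⟩ := hvp
  have h := hadmP (M + 1) (by omega)
  rw [show M + 1 + 1 = M + 2 from by omega] at h
  obtain ⟨x, y, z, hs, h1, h2, h3⟩ := h
  exact ⟨by omega, z, by omega, by omega⟩

open Classical in
noncomputable def Fterm (M i' j' : ℕ) (pt : (ℕ → ℕ) × (ℕ → ℕ)) :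
    AddMonoidAlgebra ℤ (ℤ × ℤ × ℤ) :=
  if pt.1 (M + 2) = i' ∧ pt.1 (M + 2) + pt.2 (M + 1) = pt.1 (M + 1) + 2 * j'
  then AddMonoidAlgebra.single (wt (M + 3) pt) 1 else 0

lemma inner_eq (k l M i j : ℕ) (pt : (ℕ → ℕ) × (ℕ → ℕ))
    (hpt : pt ∈ PathSet k l (M + 3) i j) :
    ∑ i' ∈ Finset.range (k + 1), ∑ j' ∈ Finset.range (i' + 1), Fterm M i' j' pt =
      AddMonoidAlgebra.single (wt (M + 3) pt) 1 := by
  classical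
  obtain ⟨hbd, j'', hj''le, hj''eq⟩ := fiber_data k l M i j pt hpt
  rw [Finset.sum_eq_single (pt.1 (M + 2))]
  · rw [Finset.sum_eq_single j'']
    · unfold Fterm
      rw [if_pos ⟨rfl, hj''eq⟩]
    · intro j' hj' hne
      unfold Fterm
      rw [if_neg]
      rintro ⟨-, he⟩
      exact hne (by omega)
    · intro h
      exact absurd (Finset.mem_range.mpr (by omega)) h
  · intro i' hi' hne
    apply Finset.sum_eq_zero
    intro j' hj'
    unfold Fterm
    rw [if_neg]
    rintro ⟨h1, -⟩
    exact hne (by omega)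
  · intro h
    exact absurd (Finset.mem_range.mpr (by omega)) h


/-- The recursion for right concatenation:
`χ^{N+1}_{k,l}[*;i,j] = Σ_{0≤j'≤i'≤k} R^{(N)}_k((i,j),(i',j')) χ^N_{k,l}[*;i',j']`. -/
theorem stmt_10 (k N l : ℕ) (hk : 1 ≤ k) (hN : 2 ≤ N) (hl : l ≤ k)
    (i j : ℕ) (hji : j ≤ i) (hik : i ≤ k) :
    chiEnd k l (N + 1) i j =
      ∑ i' ∈ Finset.range (k + 1), ∑ j' ∈ Finset.range (i' + 1),
        Rmat k N i j i' j' * chiEnd k l N i' j' := by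
  classical
  obtain ⟨M, rfl⟩ : ∃ M, N = M + 2 := ⟨N - 2, by omega⟩
  rw [show M + 2 + 1 = M + 3 from by omega, chiEnd_eq]
  have hterm : ∀ i' ∈ Finset.range (k + 1), ∀ j' ∈ Finset.range (i' + 1),
      (∑ pt ∈ (pathSet_finite k l (M + 3) i j).toFinset.filter (fun pt =>
          pt.1 (M + 2) = i' ∧ pt.1 (M + 2) + pt.2 (M + 1) = pt.1 (M + 1) + 2 * j'),
        AddMonoidAlgebra.single (wt (M + 3) pt) (1 : ℤ)) =
      Rmat k (M + 2) i j i' j' * chiEnd k l (M + 2) i' j' := by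
    intro i' hi' j' hj'
    by_cases hC : ∃ B : ℕ, (B : ℤ) = 2 * j - i + i' ∧ IsAdm k i' B i
    · obtain ⟨B, hB, hadm⟩ := hC
      rw [Rmat, if_pos ⟨B, hB, hadm⟩, chiEnd_eq, Finset.mul_sum]
      simp only [AddMonoidAlgebra.single_mul_single, one_mul]
      rw [show M + 2 - 1 = M + 1 from by omega]
      refine Finset.sum_nbij' (i := truncP (M + 2)) (j := extP (M + 2) i B) ?_ ?_ ?_ ?_ ?_
      · intro pt hpt
        rw [Finset.mem_filter, Set.Finite.mem_toFinset] at hpt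
        obtain ⟨hptP, hQ1, hQ2⟩ := hpt
        rw [Set.Finite.mem_toFinset]
        exact (trunc_mem k l M i j i' j' pt hptP hQ1 hQ2).1
      · intro p hp
        rw [Set.Finite.mem_toFinset] at hp
        obtain ⟨hm, hq1, hq2, -⟩ := ext_path k l M i j i' j' B hik hB hadm p hp
        rw [Finset.mem_filter, Set.Finite.mem_toFinset]
        exact ⟨hm, hq1, hq2⟩
      · intro pt hpt
        rw [Finset.mem_filter, Set.Finite.mem_toFinset] at hpt
        obtain ⟨hptP, hQ1, hQ2⟩ := hpt
        obtain ⟨-, hcast, -, hext, -⟩ := trunc_mem k l M i j i' j' pt hptP hQ1 hQ2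
        rw [show B = pt.2 (M + 2) from by omega]
        exact hext
      · intro p hp
        rw [Set.Finite.mem_toFinset] at hp
        exact (ext_path k l M i j i' j' B hik hB hadm p hp).2.2.2
      · intro pt hpt
        rw [Finset.mem_filter, Set.Finite.mem_toFinset] at hpt
        obtain ⟨hptP, hQ1, hQ2⟩ := hpt
        obtain ⟨hmemS, hcast, -, hext, -⟩ := trunc_mem k l M i j i' j' pt hptP hQ1 hQ2
        have hw := ext_wt k l M i j i' j' B hji hB hadm (truncP (M + 2) pt) hmemS
        rw [show B = pt.2 (M + 2) from by omega, hext] at hw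
        rw [hw]
    · rw [Rmat, if_neg hC, zero_mul]
      apply Finset.sum_eq_zero
      intro pt hpt
      rw [Finset.mem_filter, Set.Finite.mem_toFinset] at hpt
      obtain ⟨hptP, hQ1, hQ2⟩ := hpt
      obtain ⟨-, hcast, hadm, -, -⟩ := trunc_mem k l M i j i' j' pt hptP hQ1 hQ2
      exact absurd ⟨pt.2 (M + 2), hcast, hadm⟩ hC
  calc ∑ pt ∈ (pathSet_finite k l (M + 3) i j).toFinset,
        AddMonoidAlgebra.single (wt (M + 3) pt) (1 : ℤ)
      = ∑ pt ∈ (pathSet_finite k l (M + 3) i j).toFinset,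
          ∑ i' ∈ Finset.range (k + 1), ∑ j' ∈ Finset.range (i' + 1), Fterm M i' j' pt :=
        Finset.sum_congr rfl (fun pt hpt =>
          (inner_eq k l M i j pt ((pathSet_finite k l (M + 3) i j).mem_toFinset.mp hpt)).symm)
    _ = ∑ i' ∈ Finset.range (k + 1), ∑ pt ∈ (pathSet_finite k l (M + 3) i j).toFinset,
          ∑ j' ∈ Finset.range (i' + 1), Fterm M i' j' pt := Finset.sum_comm
    _ = ∑ i' ∈ Finset.range (k + 1), ∑ j' ∈ Finset.range (i' + 1),
          ∑ pt ∈ (pathSet_finite k l (M + 3) i j).toFinset, Fterm M i' j' pt :=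
        Finset.sum_congr rfl (fun i' _ => Finset.sum_comm)
    _ = ∑ i' ∈ Finset.range (k + 1), ∑ j' ∈ Finset.range (i' + 1),
          ∑ pt ∈ (pathSet_finite k l (M + 3) i j).toFinset.filter (fun pt =>
            pt.1 (M + 2) = i' ∧ pt.1 (M + 2) + pt.2 (M + 1) = pt.1 (M + 1) + 2 * j'),
            AddMonoidAlgebra.single (wt (M + 3) pt) (1 : ℤ) :=
        Finset.sum_congr rfl (fun i' _ => Finset.sum_congr rfl (fun j' _ =>
          (Finset.sum_filter _ _).symm))
    _ = ∑ i' ∈ Finset.range (k + 1), ∑ j' ∈ Finset.range (i' + 1),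
          Rmat k (M + 2) i j i' j' * chiEnd k l (M + 2) i' j' :=
        Finset.sum_congr rfl (fun i' hi' => Finset.sum_congr rfl (fun j' hj' =>
          hterm i' hi' j' hj'))
end
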